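/- arXiv:0708.1714 — 7 statements merged into one kernel-verified Lean document; each statement's English description precedes it below -/
import Mathlib

section
/- Let 𝔤 be a Lie algebra over ℂ with a decomposition 𝔤 = 𝔯₋ ⊕ 𝔪 ⊕ 𝔯₊ where 𝔯₊ is an abelian Lie subalgebra, and let z be an element of the center of 𝔪 inside 𝔤 such that [z,x] = x for all x ∈ 𝔯₊. Then for any scalar c ∈ ℂ, setting z_c := z + c·1 in the universal enveloping algebra U(𝔤), the subspace 𝔯₊·z_c = {x z_c : x ∈ 𝔯₊} of U(𝔤) is an abelian Lie subalgebra: [x z_c, x' z_c] = 0 for all x, x' ∈ 𝔯₊. -/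
/-! Since `[z, x] = x`, moving `z` past `x` in `U(𝔤)` shifts it by one: `z x = x (z + 1)`, and the
same holds for `z_c`, because the scalar `c` is central. Hence
`(x z_c)(x' z_c) = x x' (z_c + 1) z_c`, which is symmetric in `x, x'` as soon as `x` and `x'`
commute, and they do because `𝔯₊` is abelian. -/

attribute [local instance] LieRing.ofAssociativeRing

section Ring

variable {A : Type*} [Ring A]

theorem mul_eq_mul_add_one_of_lie_eq_self {z a : A} (h : ⁅z, a⁆ = a) : z * a = a * (z + 1) := by
  rw [Ring.lie_def, sub_eq_iff_eq_add'] at h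
  rw [mul_add_one, ← h]

theorem Commute.mul_right_of_lie_eq_self {a b z : A} (hab : Commute a b)
    (ha : ⁅z, a⁆ = a) (hb : ⁅z, b⁆ = b) : Commute (a * z) (b * z) :=
  calc a * z * (b * z) = a * b * (z + 1) * z := by
        rw [mul_assoc a z, ← mul_assoc z, mul_eq_mul_add_one_of_lie_eq_self hb]; simp only [mul_assoc]
    _ = b * a * (z + 1) * z := by rw [hab.eq]
    _ = b * z * (a * z) := by
        rw [mul_assoc b z, ← mul_assoc z, mul_eq_mul_add_one_of_lie_eq_self ha]; simp only [mul_assoc]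

theorem lie_add_algebraMap_left {R : Type*} [CommRing R] [Algebra R A] (z a : A) (c : R) :
    ⁅z + algebraMap R A c, a⁆ = ⁅z, a⁆ := by
  rw [add_lie, (Algebra.commute_algebraMap_left c a).lie_eq, add_zero]

end Ring

theorem stmt1_general (g : Type*) [LieRing g] [LieAlgebra ℂ g]
    (rpos : LieSubalgebra ℂ g)
    (habelian : ∀ x ∈ rpos, ∀ x' ∈ rpos, ⁅x, x'⁆ = 0)
    (z : g)
    (hzx : ∀ x ∈ rpos, ⁅z, x⁆ = x) (c : ℂ) :
    ∀ x ∈ rpos, ∀ x' ∈ rpos,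
      let ι := UniversalEnvelopingAlgebra.ι ℂ (L := g)
      let zc : UniversalEnvelopingAlgebra ℂ g := ι z + algebraMap ℂ _ c
      (ι x * zc) * (ι x' * zc) - (ι x' * zc) * (ι x * zc) = 0 := by
  intro x hx x' hx' ι zc
  have hzc : ∀ a ∈ rpos, ⁅zc, ι a⁆ = ι a := fun a ha => by
    rw [lie_add_algebraMap_left, ← LieHom.map_lie, hzx a ha]
  have hxx' : Commute (ι x) (ι x') := by
    rw [commute_iff_lie_eq, ← LieHom.map_lie, habelian x hx x' hx', map_zero]
  exact sub_eq_zero_of_eq (hxx'.mul_right_of_lie_eq_self (hzc x hx) (hzc x' hx')).eq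

/-- If `𝔤 = 𝔯₋ ⊕ 𝔪 ⊕ 𝔯₊` with `𝔯₊` abelian and `z` in the center of `𝔪`
satisfying `[z,x] = x` for all `x ∈ 𝔯₊`, then for any `c : ℂ`, setting
`z_c := ι z + c • 1` in `U(𝔤)`, the subspace `𝔯₊ · z_c` is abelian:
`[x z_c, x' z_c] = 0` for all `x, x' ∈ 𝔯₊`. -/
theorem stmt1 (g : Type*) [LieRing g] [LieAlgebra ℂ g]
    (rneg m rpos : LieSubalgebra ℂ g)
    (hdec : DirectSum.IsInternal ![rneg.toSubmodule, m.toSubmodule, rpos.toSubmodule])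
    (habelian : ∀ x ∈ rpos, ∀ x' ∈ rpos, ⁅x, x'⁆ = 0)
    (z : g) (hzm : z ∈ m) (hzcentral : ∀ w ∈ m, ⁅z, w⁆ = 0)
    (hzx : ∀ x ∈ rpos, ⁅z, x⁆ = x) (c : ℂ) :
    ∀ x ∈ rpos, ∀ x' ∈ rpos,
      let ι := UniversalEnvelopingAlgebra.ι ℂ (L := g)
      let zc : UniversalEnvelopingAlgebra ℂ g := ι z + algebraMap ℂ _ c
      (ι x * zc) * (ι x' * zc) - (ι x' * zc) * (ι x * zc) = 0 :=
  stmt1_general g rpos habelian z hzx c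
end

section
/- Let 𝔤 = 𝔯₋ ⊕ 𝔪 ⊕ 𝔯₊ be as above, with 𝔯₊ an 𝔪-module under the adjoint action and z central in 𝔪 with [z,x]=x for x ∈ 𝔯₊. Then for any c ∈ ℂ, the map φ: 𝔪 ⊕ 𝔯₊ → U(𝔤) given by φ(m) = m for m ∈ 𝔪 and φ(x) = x z_c for x ∈ 𝔯₊ (where z_c = z + c) is an injective Lie algebra homomorphism from the parabolic subalgebra 𝔭 = 𝔪 ⊕ 𝔯₊ into U(𝔤) with the commutator bracket. -/
/-!
The bracket identity holds in any associative ring: if `ζ` commutes with `a` and `a'`, and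
`⁅ζ, b⁆ = b`, `⁅ζ, b'⁆ = b'` for commuting `b, b'`, then
`⁅a + b ζ, a' + b' ζ⁆ = ⁅a, a'⁆ + (⁅a, b'⁆ - ⁅a', b⁆) ζ`; apply it with `ζ = z_c`.

For injectivity, bracketing `w + x z_c = 0` with `z_c` gives `x z_c = 0`, hence `w = 0` in `U(𝔤)`;
that `ι` is injective is the Poincaré–Birkhoff–Witt argument: `𝔤` acts on the polynomial algebra
in an ordered basis `(x_i)` so that `x_i · 1 = z_i` (Humphreys, §17.4). Finally `x z_c = 0`
evaluated in the adjoint representation at `z` gives `c x = 0`, and in `𝔤 ⊗ 𝔤` at `z ⊗ x` it gives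
`(1 + c) x ⊗ x = 0`.
-/

open Finsupp (single)

theorem lie_lie_eq_lie_lie_add_lie_lie {L : Type*} [LieRing L] (x y w : L) :
    ⁅⁅x, w⁆, y⁆ = ⁅⁅x, y⁆, w⁆ + ⁅⁅y, w⁆, x⁆ := by
  have h := lie_jacobi x y w
  rw [← lie_skew w x, lie_neg] at h
  rw [← lie_skew ⁅x, w⁆ y, ← lie_skew ⁅x, y⁆ w, ← lie_skew ⁅y, w⁆ x, ← sub_eq_zero, ← h]
  abel

namespace PBW

variable {R L I : Type*} [CommRing R] [LieRing L] [LieAlgebra R L]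

/- A monomial in the ordered basis `(B i)` of `L` is a multiset of indices, so `Multiset I →₀ R`
plays the role of the polynomial algebra `S(L)`, filtered by the degrees `degLE n`. -/

variable (R) in
def degLE (n : ℕ) : Submodule R (Multiset I →₀ R) :=
  Finsupp.supported R R {M | Multiset.card M ≤ n}

lemma degLE_mono {m n : ℕ} (h : m ≤ n) : degLE R (I := I) m ≤ degLE R n :=
  Finsupp.supported_mono fun _ hM => le_trans hM h

lemma single_mem_degLE {M : Multiset I} {n : ℕ} (h : Multiset.card M ≤ n) (a : R) :
    single M a ∈ degLE R n :=
  Finsupp.single_mem_supported R a h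

lemma card_le_of_mem_support {v : Multiset I →₀ R} {n : ℕ} (hv : v ∈ degLE R n)
    {N : Multiset I} (hN : N ∈ v.support) : Multiset.card N ≤ n :=
  (Finsupp.mem_supported R v).mp hv hN

variable [LinearOrder I] (B : Module.Basis I R L)

/- `single (i ::ₘ M) 1 + lower B i M` is `x_i · z_M`. When `i` exceeds the least index `j` of `M`,
it is forced by `x_i · z_M = x_j · (x_i · z_{M.erase j}) + ⁅x_i, x_j⁆ · z_{M.erase j}`. The test on
`card N` always holds (`lower_mem_degLE`); it only makes the recursion visibly terminate. -/
noncomputable def lower (i : I) (M : Multiset I) : Multiset I →₀ R :=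
  if hM : M = 0 then 0
  else
    let j := M.toFinset.min' (Multiset.toFinset_nonempty.mpr hM)
    if i ≤ j then 0
    else
      (lower i (M.erase j)).sum (fun N a =>
        if Multiset.card N < Multiset.card M then a • (single (j ::ₘ N) 1 + lower j N) else 0)
      + (B.repr ⁅B i, B j⁆).sum fun k c => c • (single (k ::ₘ M.erase j) 1 + lower k (M.erase j))
termination_by Multiset.card M
decreasing_by
  all_goals first
    | exact Multiset.card_erase_lt_of_mem (Multiset.mem_toFinset.mp (Finset.min'_mem _ _))
    | assumption

lemma lower_of_forall_le {i : I} {M : Multiset I} (h : ∀ k ∈ M, i ≤ k) : lower B i M = 0 := by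
  rw [lower]
  split_ifs with hM
  · rfl
  dsimp only
  rw [if_pos]
  exact (h _ (Multiset.mem_toFinset.mp (Finset.min'_mem _ _)))

lemma lower_mem_degLE (i : I) (M : Multiset I) : lower B i M ∈ degLE R (Multiset.card M) := by
  induction hn : Multiset.card M using Nat.strong_induction_on generalizing i M with
  | _ n ih =>
  rw [lower]
  split_ifs with hM
  · exact zero_mem _
  dsimp only
  split_ifs
  · exact zero_mem _
  set j := M.toFinset.min' (Multiset.toFinset_nonempty.mpr hM)
  have hcard : Multiset.card (M.erase j) + 1 = n := by
    rw [← hn, Multiset.card_erase_add_one (Multiset.mem_toFinset.mp (Finset.min'_mem _ _))]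
  have ih' := fun k => ih _ (by omega) k (M.erase j) rfl
  refine add_mem (Submodule.finsuppSum_mem _ _ _ _ fun N hN => ?_)
    (Submodule.finsuppSum_mem _ _ _ _ fun k _ => Submodule.smul_mem _ _ <|
      add_mem (single_mem_degLE (by simp; omega) 1) (degLE_mono (by omega) (ih' k)))
  have hN' := card_le_of_mem_support (ih' i) (Finsupp.mem_support_iff.mpr hN)
  split_ifs with hNn
  · rw [hn] at hNn
    exact Submodule.smul_mem _ _ <| add_mem (single_mem_degLE (by simp; omega) 1)
      (degLE_mono hNn.le (ih _ hNn j N rfl))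
  · exact zero_mem _

noncomputable def actMonomial (i : I) (M : Multiset I) : Multiset I →₀ R :=
  single (i ::ₘ M) 1 + lower B i M

noncomputable def actBasis (i : I) : Module.End R (Multiset I →₀ R) :=
  Finsupp.linearCombination R (actMonomial B i)

noncomputable def act : L →ₗ[R] Module.End R (Multiset I →₀ R) :=
  B.constr R (actBasis B)

lemma act_basis (i : I) : act B (B i) = actBasis B i := B.constr_basis R _ i

lemma actBasis_single (i : I) (M : Multiset I) :
    actBasis B i (single M 1) = actMonomial B i M := by
  rw [actBasis, Finsupp.linearCombination_single, one_smul]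

lemma act_apply (y : L) (v : Multiset I →₀ R) :
    act B y v = (B.repr y).sum fun k c => c • actBasis B k v := by
  simp only [act, Module.Basis.constr_apply, Finsupp.sum, LinearMap.coe_sum,
    Finset.sum_apply, LinearMap.smul_apply]

lemma actBasis_single_of_forall_le {i : I} {M : Multiset I} (h : ∀ k ∈ M, i ≤ k) :
    actBasis B i (single M 1) = single (i ::ₘ M) 1 := by
  rw [actBasis_single, actMonomial, lower_of_forall_le B h, add_zero]

lemma lower_cons {i j : I} {M : Multiset I} (hj : ∀ k ∈ M, j ≤ k) (hji : j < i) :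
    lower B i (j ::ₘ M) = actBasis B j (lower B i M) + act B ⁅B i, B j⁆ (single M 1) := by
  have hmin :
      (j ::ₘ M).toFinset.min' (Multiset.toFinset_nonempty.mpr Multiset.cons_ne_zero) = j := by
    rw [Finset.min'_eq_iff]
    simp only [Multiset.toFinset_cons, Finset.mem_insert, Multiset.mem_toFinset, true_or, true_and]
    rintro b (rfl | hb)
    exacts [le_rfl, hj b hb]
  rw [lower, dif_neg Multiset.cons_ne_zero]
  simp only [hmin, if_neg hji.not_ge, Multiset.erase_cons_head]
  congr 1
  · rw [actBasis, Finsupp.linearCombination_apply]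
    refine Finsupp.sum_congr fun N hN => ?_
    rw [if_pos, actMonomial]
    have := card_le_of_mem_support (lower_mem_degLE B i M) hN
    simp only [Multiset.card_cons]
    omega
  · simp only [act_apply, actBasis_single, actMonomial]

lemma actBasis_comm_of_forall_le {i j : I} {M : Multiset I} (hj : ∀ k ∈ M, j ≤ k) (hji : j < i) :
    actBasis B i (actBasis B j (single M 1)) =
      actBasis B j (actBasis B i (single M 1)) + act B ⁅B i, B j⁆ (single M 1) := by
  have hjiM : ∀ k ∈ i ::ₘ M, j ≤ k := Multiset.forall_mem_cons.mpr ⟨hji.le, hj⟩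
  rw [actBasis_single_of_forall_le B hj, actBasis_single, actMonomial, lower_cons B hj hji,
    actBasis_single, actMonomial, map_add, actBasis_single_of_forall_le B hjiM,
    Multiset.cons_swap]
  abel

/- Write `z_{l :: M} = x_l · z_M` and move `x_l` outwards past `x_i` and `x_j`; what remains is the
Jacobi identity. -/
lemma actBasis_comm_cons {i j l : I} {M : Multiset I} (hl : ∀ k ∈ M, l ≤ k) (hlj : l < j)
    (hji : j < i) (ih : ∀ v ∈ degLE R (Multiset.card M), ∀ y y' : L,
      act B y (act B y' v) = act B y' (act B y v) + act B ⁅y, y'⁆ v) :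
    actBasis B i (actBasis B j (single (l ::ₘ M) 1)) =
      actBasis B j (actBasis B i (single (l ::ₘ M) 1)) +
        act B ⁅B i, B j⁆ (single (l ::ₘ M) 1) := by
  set z : Multiset I →₀ R := single M 1
  have hz : z ∈ degLE R (Multiset.card M) := single_mem_degLE le_rfl 1
  have ihb : ∀ v ∈ degLE R (Multiset.card M), ∀ a b : I,
      actBasis B a (actBasis B b v) = actBasis B b (actBasis B a v) + act B ⁅B a, B b⁆ v :=
    fun v hv a b => by simpa only [act_basis] using ih v hv (B a) (B b)
  have hcomm : ∀ a b : I, l < a → l < b →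
      actBasis B a (actBasis B l (actBasis B b z)) =
        actBasis B l (actBasis B a (actBasis B b z)) + act B ⁅B a, B l⁆ (actBasis B b z) := by
    intro a b hla hlb
    have hlbM : ∀ k ∈ b ::ₘ M, l ≤ k := Multiset.forall_mem_cons.mpr ⟨hlb.le, hl⟩
    rw [actBasis_single, actMonomial]
    simp only [map_add]
    rw [actBasis_comm_of_forall_le B hlbM hla, ihb _ (lower_mem_degLE B b M) a l]
    abel
  have hil := ih z hz ⁅B i, B l⁆ (B j)
  have hjl := ih z hz ⁅B j, B l⁆ (B i)
  have hij := ih z hz ⁅B i, B j⁆ (B l)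
  simp only [act_basis] at hil hjl hij
  rw [← actBasis_single_of_forall_le B hl, actBasis_comm_of_forall_le B hl hlj,
    actBasis_comm_of_forall_le B hl (hlj.trans hji), map_add, map_add,
    hcomm i j (hlj.trans hji) hlj, hcomm j i hlj (hlj.trans hji), ihb z hz i j, hil, hjl, hij,
    lie_lie_eq_lie_lie_add_lie_lie]
  simp only [map_add, LinearMap.add_apply]
  abel

noncomputable def lieDefect : L →ₗ[R] L →ₗ[R] Module.End R (Multiset I →₀ R) :=
  LinearMap.mk₂ R (fun y y' => act B y * act B y' - act B y' * act B y - act B ⁅y, y'⁆)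
    (fun _ _ _ => by simp only [map_add, add_lie, add_mul, mul_add]; abel)
    (fun _ _ _ => by
      simp only [map_smul, smul_lie, smul_mul_assoc, mul_smul_comm]; module)
    (fun _ _ _ => by simp only [map_add, lie_add, add_mul, mul_add]; abel)
    (fun _ _ _ => by
      simp only [map_smul, lie_smul, smul_mul_assoc, mul_smul_comm]; module)

lemma lieDefect_apply (y y' : L) (v : Multiset I →₀ R) :
    lieDefect B y y' v = act B y (act B y' v) - act B y' (act B y v) - act B ⁅y, y'⁆ v :=
  rfl

lemma lieDefect_eq_zero_of_single {n : ℕ} (h : ∀ M : Multiset I, Multiset.card M ≤ n →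
      ∀ i j : I, lieDefect B (B i) (B j) (single M 1) = 0)
    {v : Multiset I →₀ R} (hv : v ∈ degLE R n) (y y' : L) : lieDefect B y y' v = 0 := by
  have hbasis : ∀ i j : I, lieDefect B (B i) (B j) v = 0 := by
    intro i j
    suffices degLE R n ≤ LinearMap.ker (lieDefect B (B i) (B j)) from this hv
    rw [degLE, Finsupp.supported_eq_span_single, Submodule.span_le]
    rintro _ ⟨M, hM, rfl⟩
    exact h M hM i j
  have := LinearMap.ext_basis B B (B := (lieDefect B).compr₂ (LinearMap.applyₗ v)) (B' := 0)
    (by simpa using hbasis)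
  simpa using LinearMap.congr_fun₂ this y y'

theorem act_lie_of_mem_degLE (n : ℕ) : ∀ v ∈ degLE R n, ∀ y y' : L,
    act B y (act B y' v) = act B y' (act B y v) + act B ⁅y, y'⁆ v := by
  induction n using Nat.strong_induction_on with
  | _ n ih =>
  have hlt : ∀ M : Multiset I, Multiset.card M ≤ n → ∀ i j : I, j < i →
      actBasis B i (actBasis B j (single M 1)) =
        actBasis B j (actBasis B i (single M 1)) + act B ⁅B i, B j⁆ (single M 1) := by
    intro M hM i j hji
    by_cases hj : ∀ k ∈ M, j ≤ k
    · exact actBasis_comm_of_forall_le B hj hji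
    push Not at hj
    obtain ⟨k, hkM, hkj⟩ := hj
    obtain ⟨l, hlM, hl⟩ :=
      Multiset.exists_min_image (id : I → I) (s := M) (by rintro rfl; simp at hkM)
    obtain ⟨M', rfl⟩ := Multiset.exists_cons_of_mem hlM
    rw [Multiset.card_cons] at hM
    exact actBasis_comm_cons B (fun k hk => hl k (Multiset.mem_cons_of_mem hk))
      ((hl k hkM).trans_lt hkj) hji (ih _ (by omega))
  intro v hv y y'
  suffices lieDefect B y y' v = 0 by rwa [lieDefect_apply, sub_sub, sub_eq_zero] at this
  refine lieDefect_eq_zero_of_single B (fun M hM i j => ?_) hv y y'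
  rw [lieDefect_apply, act_basis, act_basis]
  rcases lt_trichotomy i j with hij | rfl | hji
  · rw [hlt M hM j i hij, ← lie_skew, map_neg]
    simp only [LinearMap.neg_apply]
    abel
  · simp
  · rw [hlt M hM i j hji]
    abel

attribute [local instance] LieRing.ofAssociativeRing in
noncomputable def actLieHom : L →ₗ⁅R⁆ Module.End R (Multiset I →₀ R) :=
  { act B with
    map_lie' := fun {y y'} => LinearMap.ext fun v => by
      have hv : v ∈ degLE R (v.support.sup Multiset.card) :=
        (Finsupp.mem_supported R v).mpr fun _ hN => Finset.le_sup (f := Multiset.card) hN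
      simp only [AddHom.toFun_eq_coe, LinearMap.coe_toAddHom, LieRing.of_associative_ring_bracket,
        LinearMap.sub_apply, Module.End.mul_apply,
        act_lie_of_mem_degLE B _ v hv y y', add_sub_cancel_left] }

lemma actLieHom_apply (y : L) : actLieHom B y = act B y := rfl

lemma act_single_zero (y : L) :
    act B y (single 0 1) = Finsupp.mapDomain ({·}) (B.repr y) := by
  rw [act_apply, Finsupp.mapDomain]
  refine Finsupp.sum_congr fun k _ => ?_
  rw [actBasis_single_of_forall_le B (by simp), Finsupp.smul_single, smul_eq_mul, mul_one,
    Multiset.cons_zero]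

end PBW

section Commutator

attribute [local instance] LieRing.ofAssociativeRing

variable {A : Type*} [Ring A]

theorem lie_mul_of_commute {a b ζ : A} (h : Commute a ζ) : ⁅a, b * ζ⁆ = ⁅a, b⁆ * ζ := by
  rw [Ring.lie_def, Ring.lie_def, sub_mul, mul_assoc b, ← h.eq, ← mul_assoc, ← mul_assoc]

theorem mul_add_one_of_lie_eq_self {ζ b : A} (h : ⁅ζ, b⁆ = b) : ζ * b = b * (ζ + 1) := by
  rw [Ring.lie_def, sub_eq_iff_eq_add] at h
  rw [h, mul_add_one, add_comm]

theorem Commute.mul_of_lie_eq_self {a b ζ : A} (hab : Commute a b) (ha : ⁅ζ, a⁆ = a)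
    (hb : ⁅ζ, b⁆ = b) : Commute (a * ζ) (b * ζ) :=
  calc a * ζ * (b * ζ) = a * b * ((ζ + 1) * ζ) := by
        rw [mul_assoc, ← mul_assoc ζ, mul_add_one_of_lie_eq_self hb]; simp only [mul_assoc]
    _ = b * a * ((ζ + 1) * ζ) := by rw [hab.eq]
    _ = b * ζ * (a * ζ) := by
        rw [mul_assoc b ζ, ← mul_assoc ζ, mul_add_one_of_lie_eq_self ha]; simp only [mul_assoc]

theorem lie_add_mul_add_mul {a a' b b' ζ : A} (ha : Commute a ζ) (ha' : Commute a' ζ)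
    (hb : ⁅ζ, b⁆ = b) (hb' : ⁅ζ, b'⁆ = b') (hbb' : Commute b b') :
    ⁅a + b * ζ, a' + b' * ζ⁆ = ⁅a, a'⁆ + (⁅a, b'⁆ - ⁅a', b⁆) * ζ := by
  rw [add_lie, lie_add, lie_add, lie_mul_of_commute ha, ← lie_skew (b * ζ) a',
    lie_mul_of_commute ha', commute_iff_lie_eq.mp (hbb'.mul_of_lie_eq_self hb hb'), sub_mul]
  abel

theorem mul_eq_zero_of_add_mul_eq_zero {a b ζ : A} (ha : Commute a ζ) (hb : ⁅ζ, b⁆ = b)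
    (h : a + b * ζ = 0) : b * ζ = 0 := by
  have := congrArg (⁅ζ, ·⁆) h
  simpa only [lie_add, lie_zero, commute_iff_lie_eq.mp ha.symm,
    lie_mul_of_commute (Commute.refl ζ), hb, zero_add] using this

theorem lie_add_algebraMap {R : Type*} [CommRing R] [Algebra R A] (a b : A) (c : R) :
    ⁅a + algebraMap R A c, b⁆ = ⁅a, b⁆ := by
  rw [add_lie, commute_iff_lie_eq.mp (Algebra.commutes c b), add_zero]

end Commutator

theorem TensorProduct.tmul_self_eq_zero_iff {R V : Type*} [CommRing R] [NoZeroDivisors R]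
    [AddCommGroup V] [Module R V] [Module.Projective R V] {x : V} :
    x ⊗ₜ[R] x = 0 ↔ x = 0 := by
  refine ⟨fun h => ?_, fun h => by rw [h, TensorProduct.tmul_zero]⟩
  by_contra hx
  obtain ⟨f, hf⟩ := Module.Projective.exists_dual_ne_zero R hx
  have := congr(TensorProduct.lift ((LinearMap.mul R R).compl₁₂ f f) $h)
  simp only [TensorProduct.lift.tmul, LinearMap.compl₁₂_apply, LinearMap.mul_apply', map_zero,
    mul_self_eq_zero] at this
  exact hf this

namespace UniversalEnvelopingAlgebra

attribute [local instance] LieRing.ofAssociativeRing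

section

variable {R L : Type*} [CommRing R] [LieRing L] [LieAlgebra R L]

theorem lie_ι (x y : L) : ⁅ι R x, ι R y⁆ = ι R ⁅x, y⁆ := ((ι R).map_lie x y).symm

theorem commute_ι_of_lie_eq_zero {x y : L} (h : ⁅x, y⁆ = 0) : Commute (ι R x) (ι R y) := by
  rw [commute_iff_lie_eq, lie_ι, h, map_zero]

theorem smul_lie_eq_zero_of_ι_mul_eq_zero {M : Type*} [AddCommGroup M] [Module R M]
    [LieRingModule L M] [LieModule R L M] {x z : L} {c μ : R}
    (h : ι R x * (ι R z + algebraMap R _ c) = 0) {v : M} (hv : ⁅z, v⁆ = μ • v) :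
    (μ + c) • ⁅x, v⁆ = 0 := by
  have := congr(lift R (LieModule.toEnd R L M) $h v)
  simpa [hv, add_smul] using this

end

theorem ι_injective (R L : Type*) [CommRing R] [LieRing L] [LieAlgebra R L] [Module.Free R L] :
    Function.Injective (ι R (L := L)) := by
  let : LinearOrder (Module.Free.ChooseBasisIndex R L) := IsWellOrder.linearOrder WellOrderingRel
  let B := Module.Free.chooseBasis R L
  intro y y' h
  apply B.repr.injective
  apply Finsupp.mapDomain_injective fun _ _ => Multiset.singleton_inj.mp
  rw [← PBW.act_single_zero, ← PBW.act_single_zero]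
  simpa only [lift_ι_apply, PBW.actLieHom_apply] using
    congr(lift R (PBW.actLieHom B) $h (single 0 1))

theorem eq_zero_of_ι_mul_eq_zero {K L : Type*} [Field K] [LieRing L] [LieAlgebra K L] {x z : L}
    {c : K} (hzx : ⁅z, x⁆ = x) (h : ι K x * (ι K z + algebraMap K _ c) = 0) : x = 0 := by
  have hxz : ⁅x, z⁆ = -x := by rw [← lie_skew, hzx]
  have hadj : c • x = 0 := by
    simpa [hxz] using smul_lie_eq_zero_of_ι_mul_eq_zero (M := L) (μ := 0) h (v := z) (by simp)
  have htens : (1 + c) • (x ⊗ₜ[K] x) = 0 := by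
    simpa [TensorProduct.LieModule.lie_tmul_right, hxz, hzx, TensorProduct.neg_tmul] using
      smul_lie_eq_zero_of_ι_mul_eq_zero (μ := 1) h (v := z ⊗ₜ[K] x)
        (by simp [TensorProduct.LieModule.lie_tmul_right, hzx])
  rcases eq_or_ne c 0 with rfl | hc
  · simpa [TensorProduct.tmul_self_eq_zero_iff] using htens
  · exact (smul_eq_zero.mp hadj).resolve_left hc

end UniversalEnvelopingAlgebra

theorem stmt2_general (g : Type*) [LieRing g] [LieAlgebra ℂ g]
    (m rpos : LieSubalgebra ℂ g)
    (habelian : ∀ x ∈ rpos, ∀ x' ∈ rpos, ⁅x, x'⁆ = 0)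
    (z : g) (hzcentral : ∀ w ∈ m, ⁅z, w⁆ = 0)
    (hzx : ∀ x ∈ rpos, ⁅z, x⁆ = x) (c : ℂ) :
    let ι := UniversalEnvelopingAlgebra.ι ℂ (L := g)
    let zc : UniversalEnvelopingAlgebra ℂ g := ι z + algebraMap ℂ _ c
    (∀ w ∈ m, ∀ x ∈ rpos, ∀ w' ∈ m, ∀ x' ∈ rpos,
      ⁅ι w + ι x * zc, ι w' + ι x' * zc⁆ =
        ι ⁅w, w'⁆ + ι (⁅w, x'⁆ - ⁅w', x⁆) * zc) ∧
    (∀ w ∈ m, ∀ x ∈ rpos, ι w + ι x * zc = 0 → w = 0 ∧ x = 0) := by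
  intro ι zc
  have hm : ∀ w ∈ m, Commute (ι w) zc := fun w hw =>
    (UniversalEnvelopingAlgebra.commute_ι_of_lie_eq_zero (hzcentral w hw)).symm.add_right
      (Algebra.commute_algebraMap_right c _)
  have hr : ∀ x ∈ rpos, ⁅zc, ι x⁆ = ι x := fun x hx => by
    rw [lie_add_algebraMap, UniversalEnvelopingAlgebra.lie_ι, hzx x hx]
  refine ⟨fun w hw x hx w' hw' x' hx' => ?_, fun w hw x hx h => ?_⟩
  · rw [lie_add_mul_add_mul (hm w hw) (hm w' hw') (hr x hx) (hr x' hx')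
      (UniversalEnvelopingAlgebra.commute_ι_of_lie_eq_zero (habelian x hx x' hx')),
      UniversalEnvelopingAlgebra.lie_ι, UniversalEnvelopingAlgebra.lie_ι,
      UniversalEnvelopingAlgebra.lie_ι, map_sub]
  · have hx0 := mul_eq_zero_of_add_mul_eq_zero (hm w hw) (hr x hx) h
    rw [hx0, add_zero] at h
    exact ⟨UniversalEnvelopingAlgebra.ι_injective ℂ g (h.trans (map_zero ι).symm),
      UniversalEnvelopingAlgebra.eq_zero_of_ι_mul_eq_zero (hzx x hx) hx0⟩

/-- With `𝔤 = 𝔯₋ ⊕ 𝔪 ⊕ 𝔯₊`, `𝔯₊` an abelian `𝔪`-module and `z` central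
in `𝔪` with `[z,x] = x` for `x ∈ 𝔯₊`, the map `φ : 𝔪 ⊕ 𝔯₊ → U(𝔤)`,
`φ(w + x) = ι w + ι x · z_c` (`z_c = ι z + c`), is an injective Lie algebra
homomorphism from the parabolic `𝔭 = 𝔪 ⊕ 𝔯₊` (whose bracket is
`[(w,x),(w',x')] = ([w,w'], [w,x'] − [w',x])`) into `U(𝔤)` with the commutator
bracket.  This is expressed elementwise below. -/
theorem stmt2 (g : Type*) [LieRing g] [LieAlgebra ℂ g]
    (rneg m rpos : LieSubalgebra ℂ g)
    (hdec : DirectSum.IsInternal ![rneg.toSubmodule, m.toSubmodule, rpos.toSubmodule])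
    (habelian : ∀ x ∈ rpos, ∀ x' ∈ rpos, ⁅x, x'⁆ = 0)
    (hmx : ∀ w ∈ m, ∀ x ∈ rpos, ⁅w, x⁆ ∈ rpos)
    (z : g) (hzm : z ∈ m) (hzcentral : ∀ w ∈ m, ⁅z, w⁆ = 0)
    (hzx : ∀ x ∈ rpos, ⁅z, x⁆ = x) (c : ℂ) :
    let ι := UniversalEnvelopingAlgebra.ι ℂ (L := g)
    let zc : UniversalEnvelopingAlgebra ℂ g := ι z + algebraMap ℂ _ c
    (∀ w ∈ m, ∀ x ∈ rpos, ∀ w' ∈ m, ∀ x' ∈ rpos,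
      ⁅ι w + ι x * zc, ι w' + ι x' * zc⁆ =
        ι ⁅w, w'⁆ + ι (⁅w, x'⁆ - ⁅w', x⁆) * zc) ∧
    (∀ w ∈ m, ∀ x ∈ rpos, ι w + ι x * zc = 0 → w = 0 ∧ x = 0) :=
  stmt2_general g m rpos habelian z hzcentral hzx c
end

section
/- For n ≥ 1 and integers ℓ, the set of multiindices μ ∈ ℤ^{n+1} with μ_i < 0 for i = 1,…,n, μ_{n+1} ≥ 0, and Σ_{i=1}^n μ_i − 2μ_{n+1} = ℓ is nonempty if and only if ℓ ≤ −n, and in that case it is finite with cardinality Σ_{0 ≤ m ≤ ⌊(−ℓ−n)/2⌋} C(−ℓ − 2m − 1, n − 1). -/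
open Finset

noncomputable def symEquiv (n k : ℕ) : Sym (Fin n) k ≃ {f : Fin n → ℕ // ∑ i, f i = k} where
  toFun s := ⟨fun i => s.1.count i, by
    have h := Multiset.toFinset_sum_count_eq s.1
    rw [s.2] at h
    calc ∑ i : Fin n, (↑s : Multiset (Fin n)).count i
        = ∑ a ∈ (↑s : Multiset (Fin n)).toFinset, (↑s : Multiset (Fin n)).count a :=
          (Finset.sum_subset (Finset.subset_univ _) (by
            intro x _ hx
            simpa [Multiset.count_eq_zero] using fun h => hx (Multiset.mem_toFinset.2 h))).symm
      _ = k := h⟩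
  invFun f := ⟨∑ i, f.1 i • ({i} : Multiset (Fin n)), by
    simp [Multiset.count_sum', f.2]⟩
  left_inv s := by
    ext1
    dsimp
    calc ∑ i : Fin n, (↑s : Multiset (Fin n)).count i • ({i} : Multiset (Fin n))
        = ∑ a ∈ (↑s : Multiset (Fin n)).toFinset,
            (↑s : Multiset (Fin n)).count a • ({a} : Multiset (Fin n)) :=
          (Finset.sum_subset (Finset.subset_univ _) (by
            intro x _ hx
            have : (↑s : Multiset (Fin n)).count x = 0 := by
              simpa [Multiset.count_eq_zero] using fun h => hx (Multiset.mem_toFinset.2 h)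
            simp [this])).symm
      _ = ↑s := Multiset.toFinset_sum_count_nsmul_eq _
  right_inv f := by
    ext i
    simp [Multiset.count_sum', Multiset.count_nsmul, Multiset.count_singleton]

lemma card_adt (n k : ℕ) :
    (Finset.Nat.antidiagonalTuple n k).card = (n + k - 1).choose k := by
  classical
  have h1 : Fintype.card (Sym (Fin n) k) = (Finset.Nat.antidiagonalTuple n k).card := by
    rw [← Fintype.card_coe]
    exact Fintype.card_congr ((symEquiv n k).trans
      (Equiv.subtypeEquivRight fun f => Finset.Nat.mem_antidiagonalTuple.symm))
  rw [← h1, Sym.card_sym_eq_choose]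
  simp

/-- For `n ≥ 1` and `ℓ : ℤ`, the set of `μ ∈ ℤ^{n+1}` with `μ_i < 0`
for `i = 1,…,n`, `μ_{n+1} ≥ 0` and `∑_{i=1}^n μ_i − 2μ_{n+1} = ℓ` is nonempty iff
`ℓ ≤ −n`, and in that case it is finite of cardinality
`∑_{0 ≤ m ≤ ⌊(−ℓ−n)/2⌋} C(−ℓ−2m−1, n−1)`. -/
theorem stmt6 (n : ℕ) (hn : 1 ≤ n) (ℓ : ℤ) :
    let S : Set (Fin (n + 1) → ℤ) :=
      {μ | (∀ i : Fin n, μ i.castSucc < 0) ∧ 0 ≤ μ (Fin.last n) ∧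
        (∑ i : Fin n, μ i.castSucc) - 2 * μ (Fin.last n) = ℓ}
    (S.Nonempty ↔ ℓ ≤ -(n : ℤ)) ∧
    (ℓ ≤ -(n : ℤ) → S.Finite ∧
      S.ncard = ∑ m ∈ Finset.range (((-ℓ - n) / 2).toNat + 1),
        (-ℓ - 2 * m - 1).toNat.choose (n - 1)) := by
  classical
  intro S
  set M : ℕ := ((-ℓ - n) / 2).toNat + 1 with hM
  set g : ℕ → (Fin n → ℕ) → (Fin (n + 1) → ℤ) :=
    fun m a => Fin.snoc (fun i => -1 - (a i : ℤ)) (m : ℤ) with hg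
  have hglast : ∀ m a, g m a (Fin.last n) = (m : ℤ) := by
    intro m a; simp [hg]
  have hgcast : ∀ m a (i : Fin n), g m a i.castSucc = -1 - (a i : ℤ) := by
    intro m a i; simp [hg]
  have hginj : ∀ m, Function.Injective (g m) := by
    intro m a b hab
    funext i
    have := congrFun hab i.castSucc
    rw [hgcast, hgcast] at this
    omega
  set t : ℕ → ℕ := fun m => (-ℓ - n - 2 * m).toNat with ht
  set F : Finset (Fin (n + 1) → ℤ) :=
    (Finset.range M).biUnion
      (fun m => (Finset.Nat.antidiagonalTuple n (t m)).image (g m)) with hF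
  -- key bound: any μ ∈ S has ℓ ≤ -n and constrained last coordinate
  have hsum_neg : ∀ μ ∈ S, (∑ i : Fin n, μ i.castSucc) ≤ -(n : ℤ) := by
    intro μ hμ
    calc ∑ i : Fin n, μ i.castSucc ≤ ∑ _i : Fin n, (-1 : ℤ) :=
          Finset.sum_le_sum fun i _ => by have := hμ.1 i; omega
      _ = -(n : ℤ) := by simp
  have hSle : ∀ μ ∈ S, ℓ ≤ -(n : ℤ) := by
    intro μ hμ
    have h1 := hsum_neg μ hμ
    have h2 := hμ.2.1
    have h3 := hμ.2.2
    omega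
  -- S = F under the hypothesis
  have hSF : ℓ ≤ -(n : ℤ) → S = ↑F := by
    intro hℓ
    ext μ
    simp only [hF, Finset.coe_biUnion, Finset.coe_image, Set.mem_iUnion, Set.mem_image,
      Finset.mem_coe, Finset.mem_range, Finset.Nat.mem_antidiagonalTuple]
    constructor
    · intro hμ
      obtain ⟨hneg, hlast, hsum⟩ := hμ
      set m : ℕ := (μ (Fin.last n)).toNat with hm
      have hmZ : (m : ℤ) = μ (Fin.last n) := Int.toNat_of_nonneg hlast
      set a : Fin n → ℕ := fun i => (-1 - μ i.castSucc).toNat with ha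
      have haZ : ∀ i, (a i : ℤ) = -1 - μ i.castSucc := by
        intro i; have := hneg i
        simp only [ha]; omega
      have hsuma : (∑ i, (a i : ℤ)) = -(n : ℤ) - ℓ - 2 * m := by
        rw [Finset.sum_congr rfl fun i _ => haZ i, Finset.sum_sub_distrib]
        simp only [Finset.sum_const, Finset.card_univ, Fintype.card_fin, nsmul_eq_mul]
        omega
      have hsumnn : (0 : ℤ) ≤ ∑ i, (a i : ℤ) := Finset.sum_nonneg fun i _ => by positivity
      have h2m : 2 * (m : ℤ) ≤ -ℓ - (n : ℤ) := by
        rw [hsuma] at hsumnn; omega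
      refine ⟨m, ?_, a, ?_, ?_⟩
      · -- m < M
        simp only [hM]
        omega
      · -- ∑ a = t m
        have : ((∑ i, a i : ℕ) : ℤ) = ((t m : ℕ) : ℤ) := by
          push_cast
          rw [hsuma]
          simp only [ht]
          omega
        exact_mod_cast this
      · -- g m a = μ
        funext j
        refine Fin.lastCases ?_ ?_ j
        · rw [hglast]; omega
        · intro i; rw [hgcast]; have := haZ i; omega
    · rintro ⟨m, hmM, a, hasum, rfl⟩
      have h2m : 2 * (m : ℤ) ≤ -ℓ - n := by
        simp only [hM] at hmM
        omega
      have htZ : ((t m : ℕ) : ℤ) = -ℓ - n - 2 * m := by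
        simp only [ht]; omega
      refine ⟨fun i => by rw [hgcast]; omega, by rw [hglast]; exact Int.natCast_nonneg m, ?_⟩
      have : ∑ i : Fin n, g m a i.castSucc = -(n:ℤ) - ∑ i, (a i : ℤ) := by
        rw [Finset.sum_congr rfl fun i (_ : i ∈ Finset.univ) => hgcast m a i,
          Finset.sum_sub_distrib]
        simp only [Finset.sum_const, Finset.card_univ, Fintype.card_fin]
        ring
      rw [this, hglast]
      have h5 : (∑ i, (a i : ℤ)) = -ℓ - n - 2 * m := by
        rw [← htZ, ← hasum]; push_cast; ring
      rw [h5]; ring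
  -- disjointness and cardinality of F
  have hFcard : ℓ ≤ -(n : ℤ) → F.card = ∑ m ∈ Finset.range M, (-ℓ - 2 * m - 1).toNat.choose (n - 1) := by
    intro hℓ
    rw [hF, Finset.card_biUnion]
    · refine Finset.sum_congr rfl fun m hm => ?_
      rw [Finset.card_image_of_injective _ (hginj m), card_adt]
      have h2m : 2 * (m : ℤ) ≤ -ℓ - n := by
        simp only [Finset.mem_range, hM] at hm
        omega
      have h1 : (-ℓ - 2 * m - 1).toNat = n + t m - 1 := by
        simp only [ht]; omega
      have h2 : n + t m - 1 - t m = n - 1 := by omega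
      rw [h1, ← h2, Nat.choose_symm]
      omega
    · intro m₁ h₁ m₂ h₂ hne
      simp only [Finset.disjoint_left, Finset.mem_image]
      rintro x ⟨a, _, rfl⟩ ⟨b, _, hb⟩
      have := congrFun hb (Fin.last n)
      rw [hglast, hglast] at this
      exact hne (by exact_mod_cast this.symm)
  constructor
  · constructor
    · rintro ⟨μ, hμ⟩
      exact hSle μ hμ
    · intro hℓ
      have hfin : S.Finite := by rw [hSF hℓ]; exact F.finite_toSet
      have hcard : S.ncard = F.card := by rw [hSF hℓ, Set.ncard_coe_finset]
      have hpos : 0 < F.card := by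
        rw [hFcard hℓ]
        refine Finset.sum_pos' (fun i _ => Nat.zero_le _) ⟨0, Finset.mem_range.2 ?_, ?_⟩
        · simp [hM]
        · have : (n - 1 : ℕ) ≤ (-ℓ - 2 * (0:ℕ) - 1).toNat := by omega
          exact Nat.choose_pos this
      have : S.ncard ≠ 0 := by omega
      exact Set.nonempty_of_ncard_ne_zero this
  · intro hℓ
    refine ⟨by rw [hSF hℓ]; exact F.finite_toSet, ?_⟩
    rw [hSF hℓ, Set.ncard_coe_finset, hFcard hℓ]
end

section
/- Let A = A_{n+1}(ℂ) be the Weyl algebra and let 𝒟 be the ℂ-span of differential monomials Q^μP^ν with μ ∈ ℕⁿ × ℤ, ν ∈ ℕ^{n+1} (allowing negative powers of Q_{n+1} only), subject to Σ_{i=1}^n(μ_i − ν_i) − 2(μ_{n+1} − ν_{n+1}) = 0. Then 𝒟 is generated as a ℂ-algebra by 1 and the elements Q_iP_j, Q_{n+1}P_{n+1}, Q_iQ_jQ_{n+1}, P_iP_jQ_{n+1}^{−1} for i,j = 1,…,n. -/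
/-- `q ^ k` for an integer exponent `k`, realized via a chosen inverse `qinv`. -/
def zmonPow {A : Type*} [Ring A] (q qinv : A) (k : ℤ) : A :=
  if 0 ≤ k then q ^ k.toNat else qinv ^ (-k).toNat

/-!
A normally ordered monomial `Q^μ Q_{n+1}^k P^ν` has torus weight
`∑_{i ≤ n} (μ_i - ν_i) - 2 (k - ν_{n+1})`. Left multiplication by `Q_i`, `P_i`, `Q_{n+1}^{± 1}`,
`P_{n+1}` sends a monomial to a combination of monomials whose weight is shifted by `1`, `-1`,
`∓ 2`, `2`: the correction term produced by `[P_i, Q_i] = 1` has lost one `P_i` and one `Q_i`,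
hence has the same weight. Every generator has weight `0`, so the algebra they generate lies in
the span of the weight-`0` monomials.

Conversely, a weight-`0` monomial is a generator times a weight-`0` monomial of smaller degree,
up to a weight-`0` monomial of smaller degree: split off `Q_i P_j` when some `Q_i` and some `P_j`
(`1 ≤ i, j ≤ n`) occur; otherwise the weight condition makes the number of `Q_i` (or of `P_j`)
even, and `Q_i Q_j Q_{n+1}` (or `P_i P_j Q_{n+1}^{-1}`) is split off; once only `Q_{n+1}` and
`P_{n+1}` are left, split off `Q_{n+1} P_{n+1}`. Induction on the degree finishes the proof.
-/

section PowProd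

variable {M : Type*} [Monoid M] {f : ℕ → M} {e e' : ℕ → ℕ} {m : ℕ}

def powProd (f : ℕ → M) (e : ℕ → ℕ) (m : ℕ) : M :=
  ((List.range m).map fun i => f i ^ e i).prod

theorem powProd_succ (f : ℕ → M) (e : ℕ → ℕ) (m : ℕ) :
    powProd f e (m + 1) = powProd f e m * f m ^ e m :=
  List.prod_range_succ _ m

theorem powProd_congr (h : ∀ i < m, e i = e' i) : powProd f e m = powProd f e' m := by
  induction m with
  | zero => rfl
  | succ m ih => rw [powProd_succ, powProd_succ, ih fun i hi => h i (by omega), h m (by omega)]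

theorem powProd_eq_one (h : ∀ i < m, e i = 0) : powProd f e m = 1 := by
  induction m with
  | zero => rfl
  | succ m ih => rw [powProd_succ, ih fun i hi => h i (by omega), h m (by omega), pow_zero, one_mul]

theorem Commute.powProd_right {x : M} (h : ∀ i < m, Commute x (f i)) (e : ℕ → ℕ) :
    Commute x (powProd f e m) := by
  induction m with
  | zero => exact Commute.one_right x
  | succ m ih =>
    rw [powProd_succ]
    exact (ih fun i hi => h i (by omega)).mul_right ((h m (by omega)).pow_right _)

theorem powProd_add (hf : ∀ i < m, ∀ j < m, Commute (f i) (f j)) (e e' : ℕ → ℕ) :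
    powProd f (e + e') m = powProd f e m * powProd f e' m := by
  induction m with
  | zero => simp [powProd]
  | succ m ih =>
    have hm : Commute (f m ^ e m) (powProd f e' m) :=
      ((Commute.powProd_right fun i hi => hf m (by omega) i (by omega)) e').pow_left _
    rw [powProd_succ, powProd_succ, powProd_succ, ih fun i hi j hj => hf i (by omega) j (by omega),
      Pi.add_apply, pow_add]
    simp only [mul_assoc]
    rw [hm.left_comm]

theorem powProd_single {j : ℕ} (hj : j < m) : powProd f (Pi.single j 1) m = f j := by
  induction m with
  | zero => omega
  | succ m ih =>
    rw [powProd_succ]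
    rcases Nat.lt_succ_iff_lt_or_eq.mp hj with hjm | rfl
    · rw [ih hjm, Pi.single_eq_of_ne (by omega), pow_zero, mul_one]
    · rw [powProd_eq_one fun i hi => Pi.single_eq_of_ne (by omega) _, Pi.single_eq_same, pow_one,
        one_mul]

theorem mul_powProd (hf : ∀ i < m, ∀ j < m, Commute (f i) (f j)) {j : ℕ} (hj : j < m)
    (e : ℕ → ℕ) : f j * powProd f e m = powProd f (e + Pi.single j 1) m := by
  rw [add_comm, powProd_add hf, powProd_single hj]

end PowProd

section CanonicalCommutation

variable {A : Type*} [Semiring A]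

theorem mul_pow_of_mul_eq_add_one {p q : A} (h : p * q = q * p + 1) (m : ℕ) :
    p * q ^ m = q ^ m * p + m • q ^ (m - 1) := by
  induction m with
  | zero => simp
  | succ m ih =>
    have hq : (m • q ^ (m - 1)) * q = m • q ^ m := by
      rcases m with _ | m <;> simp [pow_succ, mul_assoc]
    rw [pow_succ, ← mul_assoc, ih, add_mul, mul_assoc, h, mul_add, mul_one, hq, ← mul_assoc,
      ← pow_succ, Nat.add_sub_cancel, succ_nsmul]
    abel

theorem mul_powProd_of_mul_eq_add_one {x : A} {f : ℕ → A} {m j : ℕ} (hj : j < m)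
    (hx : ∀ i < m, i ≠ j → Commute x (f i)) (hxf : x * f j = f j * x + 1) (e : ℕ → ℕ) :
    x * powProd f e m = powProd f e m * x + e j • powProd f (e - Pi.single j 1) m := by
  induction m with
  | zero => omega
  | succ m ih =>
    rw [powProd_succ, powProd_succ]
    rcases Nat.lt_succ_iff_lt_or_eq.mp hj with hjm | rfl
    · have hxm : Commute x (f m ^ e m) := (hx m (by omega) (by omega)).pow_right _
      rw [← mul_assoc, ih hjm fun i hi => hx i (by omega), Pi.sub_apply,
        Pi.single_eq_of_ne (by omega), Nat.sub_zero, add_mul, mul_assoc, hxm.eq, smul_mul_assoc,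
        ← mul_assoc]
    · have hxe : Commute x (powProd f e j) :=
        Commute.powProd_right (fun i hi => hx i (by omega) (by omega)) e
      have hlow : powProd f (e - Pi.single j 1) j = powProd f e j :=
        powProd_congr fun i hi => by simp [Pi.single_eq_of_ne (show i ≠ j by omega)]
      rw [← mul_assoc, hxe.eq, mul_assoc, mul_pow_of_mul_eq_add_one hxf, mul_add, ← mul_assoc,
        mul_smul_comm, Pi.sub_apply, Pi.single_eq_same, hlow]

theorem mul_units_zpow_of_mul_eq_add_one {A : Type*} [Ring A] {p : A} {u : Aˣ}
    (h : p * u = u * p + 1) (k : ℤ) :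
    p * ↑(u ^ k) = ↑(u ^ k) * p + k • (↑(u ^ (k - 1)) : A) := by
  induction k using Int.induction_on with
  | zero => simp
  | succ i ih =>
    rw [zpow_add_one, Units.val_mul, ← mul_assoc, ih, add_mul, mul_assoc, h, add_sub_cancel_right,
      smul_mul_assoc, ← Units.val_mul, ← zpow_add_one, sub_add_cancel, mul_add, mul_one,
      ← mul_assoc, ← Units.val_mul, ← zpow_add_one, add_smul, one_smul]
    abel
  | pred i ih =>
    rw [← Units.mul_left_inj u, mul_assoc, ← Units.val_mul, ← zpow_add_one, sub_add_cancel, ih,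
      add_mul, mul_assoc, h, smul_mul_assoc, ← Units.val_mul, ← zpow_add_one, sub_add_cancel,
      mul_add, mul_one, ← mul_assoc, ← Units.val_mul, ← zpow_add_one, sub_add_cancel, sub_smul,
      one_smul]
    abel

end CanonicalCommutation

section Weyl

variable {A : Type*} [Ring A]

structure LocalizedWeylRelations (Q P : ℕ → A) (Qinv : A) (n : ℕ) : Prop where
  P_mul_Q_sub : ∀ i ≤ n, ∀ j ≤ n, P i * Q j - Q j * P i = if i = j then 1 else 0
  Q_mul_Q : ∀ i ≤ n, ∀ j ≤ n, Q i * Q j = Q j * Q i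
  P_mul_P : ∀ i ≤ n, ∀ j ≤ n, P i * P j = P j * P i
  Q_mul_inv : Q n * Qinv = 1
  inv_mul_Q : Qinv * Q n = 1

def weylMonomial (Q P : ℕ → A) (Qinv : A) (n : ℕ) (μ : ℕ → ℕ) (k : ℤ) (ν : ℕ → ℕ) : A :=
  powProd Q μ n * zmonPow (Q n) Qinv k * powProd P ν (n + 1)

theorem zmonPow_units (u : Aˣ) (k : ℤ) : zmonPow (u : A) ↑u⁻¹ k = ↑(u ^ k) := by
  unfold zmonPow
  split_ifs with hk
  · rw [← Units.val_pow_eq_pow_val, ← zpow_natCast, Int.toNat_of_nonneg hk]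
  · rw [← Units.val_pow_eq_pow_val, ← zpow_natCast, inv_zpow', Int.toNat_of_nonneg (by omega),
      neg_neg]

theorem weylMonomial_eq_one {Q P : ℕ → A} {Qinv : A} {n : ℕ} {μ ν : ℕ → ℕ}
    (hμ : ∀ i < n, μ i = 0) (hν : ∀ i < n + 1, ν i = 0) : weylMonomial Q P Qinv n μ 0 ν = 1 := by
  rw [weylMonomial, powProd_eq_one hμ, powProd_eq_one hν]
  simp [zmonPow]

namespace LocalizedWeylRelations

variable {Q P : ℕ → A} {Qinv : A} {n : ℕ}

theorem commute_Q (H : LocalizedWeylRelations Q P Qinv n) {i j : ℕ} (hi : i ≤ n) (hj : j ≤ n) :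
    Commute (Q i) (Q j) :=
  H.Q_mul_Q i hi j hj

theorem commute_P (H : LocalizedWeylRelations Q P Qinv n) {i j : ℕ} (hi : i ≤ n) (hj : j ≤ n) :
    Commute (P i) (P j) :=
  H.P_mul_P i hi j hj

theorem commute_P_Q (H : LocalizedWeylRelations Q P Qinv n) {i j : ℕ} (hi : i ≤ n) (hj : j ≤ n)
    (hij : i ≠ j) : Commute (P i) (Q j) :=
  sub_eq_zero.mp ((H.P_mul_Q_sub i hi j hj).trans (if_neg hij))

theorem P_mul_Q_self (H : LocalizedWeylRelations Q P Qinv n) {i : ℕ} (hi : i ≤ n) :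
    P i * Q i = Q i * P i + 1 := by
  rw [← sub_eq_iff_eq_add', H.P_mul_Q_sub i hi i hi, if_pos rfl]

def unit (H : LocalizedWeylRelations Q P Qinv n) : Aˣ := ⟨Q n, Qinv, H.Q_mul_inv, H.inv_mul_Q⟩

theorem zmonPow_eq (H : LocalizedWeylRelations Q P Qinv n) (k : ℤ) :
    zmonPow (Q n) Qinv k = ↑(H.unit ^ k) :=
  zmonPow_units H.unit k

variable (μ : ℕ → ℕ) (k : ℤ) (ν : ℕ → ℕ)

theorem weylMonomial_eq (H : LocalizedWeylRelations Q P Qinv n) :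
    weylMonomial Q P Qinv n μ k ν = powProd Q μ n * ↑(H.unit ^ k) * powProd P ν (n + 1) := by
  rw [weylMonomial, H.zmonPow_eq]

theorem Q_mul_weylMonomial (H : LocalizedWeylRelations Q P Qinv n) {i : ℕ} (hi : i < n) :
    Q i * weylMonomial Q P Qinv n μ k ν = weylMonomial Q P Qinv n (μ + Pi.single i 1) k ν := by
  rw [weylMonomial, weylMonomial, ← mul_assoc, ← mul_assoc,
    mul_powProd (fun a ha b hb => H.commute_Q ha.le hb.le) hi]

theorem Q_top_mul_weylMonomial (H : LocalizedWeylRelations Q P Qinv n) :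
    Q n * weylMonomial Q P Qinv n μ k ν = weylMonomial Q P Qinv n μ (k + 1) ν := by
  have hQ : Commute (Q n) (powProd Q μ n) :=
    Commute.powProd_right (fun i hi => H.commute_Q le_rfl hi.le) μ
  rw [H.weylMonomial_eq, H.weylMonomial_eq, add_comm k 1, zpow_one_add, Units.val_mul, ← mul_assoc,
    ← mul_assoc, hQ.eq]
  simp only [mul_assoc]
  rfl

theorem inv_mul_weylMonomial (H : LocalizedWeylRelations Q P Qinv n) :
    Qinv * weylMonomial Q P Qinv n μ k ν = weylMonomial Q P Qinv n μ (k - 1) ν := by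
  have hQ : Commute Qinv (powProd Q μ n) := Commute.powProd_right (fun i hi =>
    (show Commute (Q i) ↑H.unit from H.commute_Q hi.le le_rfl).units_inv_right.symm) μ
  rw [H.weylMonomial_eq, H.weylMonomial_eq, sub_eq_neg_add, zpow_add, zpow_neg_one, Units.val_mul,
    ← mul_assoc, ← mul_assoc, hQ.eq]
  simp only [mul_assoc]
  rfl

theorem P_mul_weylMonomial (H : LocalizedWeylRelations Q P Qinv n) {j : ℕ} (hj : j < n) :
    P j * weylMonomial Q P Qinv n μ k ν =
      weylMonomial Q P Qinv n μ k (ν + Pi.single j 1) +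
        μ j • weylMonomial Q P Qinv n (μ - Pi.single j 1) k ν := by
  have hPQ : P j * powProd Q μ n = powProd Q μ n * P j + μ j • powProd Q (μ - Pi.single j 1) n :=
    mul_powProd_of_mul_eq_add_one hj (fun i hi hij => H.commute_P_Q hj.le hi.le hij.symm)
      (H.P_mul_Q_self hj.le) μ
  have hPu : Commute (P j) ↑(H.unit ^ k) :=
    (H.commute_P_Q hj.le le_rfl hj.ne).units_zpow_right k
  rw [H.weylMonomial_eq, H.weylMonomial_eq, H.weylMonomial_eq, ← mul_assoc, ← mul_assoc, hPQ]
  simp only [add_mul, smul_mul_assoc, mul_assoc]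
  rw [← mul_assoc (P j), hPu.eq, mul_assoc,
    mul_powProd (f := P) (fun a ha b hb => H.commute_P (by omega) (by omega)) (by omega)]

theorem P_top_mul_weylMonomial (H : LocalizedWeylRelations Q P Qinv n) :
    P n * weylMonomial Q P Qinv n μ k ν =
      weylMonomial Q P Qinv n μ k (ν + Pi.single n 1) +
        k • weylMonomial Q P Qinv n μ (k - 1) ν := by
  have hPQ : Commute (P n) (powProd Q μ n) :=
    Commute.powProd_right (fun i hi => H.commute_P_Q le_rfl hi.le hi.ne') μ
  have hPu : P n * ↑(H.unit ^ k) = ↑(H.unit ^ k) * P n + k • ↑(H.unit ^ (k - 1)) :=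
    mul_units_zpow_of_mul_eq_add_one (H.P_mul_Q_self le_rfl) k
  rw [H.weylMonomial_eq, H.weylMonomial_eq, H.weylMonomial_eq, ← mul_assoc, ← mul_assoc, hPQ.eq,
    mul_assoc _ (P n), hPu]
  simp only [mul_add, add_mul, mul_smul_comm, smul_mul_assoc, mul_assoc]
  rw [mul_powProd (f := P) (fun a ha b hb => H.commute_P (by omega) (by omega)) (by omega)]

end LocalizedWeylRelations

end Weyl

theorem exists_eq_add_single {e : ℕ → ℕ} {j : ℕ} (h : e j ≠ 0) :
    ∃ e' : ℕ → ℕ, e = e' + Pi.single j 1 := by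
  refine ⟨e - Pi.single j 1, funext fun i => ?_⟩
  rcases eq_or_ne i j with rfl | hij
  · simp only [Pi.add_apply, Pi.sub_apply, Pi.single_eq_same]
    omega
  · simp [Pi.single_eq_of_ne hij]

theorem sum_range_add_single (e : ℕ → ℕ) {i m : ℕ} (hi : i < m) :
    ∑ l ∈ Finset.range m, (e + Pi.single i 1 : ℕ → ℕ) l = ∑ l ∈ Finset.range m, e l + 1 := by
  simp [Finset.sum_add_distrib, hi]

def torusWeight (n : ℕ) (μ : ℕ → ℕ) (k : ℤ) (ν : ℕ → ℕ) : ℤ :=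
  (∑ i ∈ Finset.range n, ((μ i : ℤ) - (ν i : ℤ))) - 2 * (k - (ν n : ℤ))

section Weight

variable {n : ℕ} (μ : ℕ → ℕ) (k : ℤ) (ν : ℕ → ℕ)

theorem torusWeight_eq :
    torusWeight n μ k ν = ((∑ i ∈ Finset.range n, μ i : ℕ) : ℤ) -
      ((∑ i ∈ Finset.range n, ν i : ℕ) : ℤ) - 2 * k + 2 * (ν n : ℤ) := by
  rw [torusWeight, Finset.sum_sub_distrib]
  push_cast
  ring

theorem torusWeight_add_single_left {i : ℕ} (hi : i < n) :
    torusWeight n (μ + Pi.single i 1) k ν = torusWeight n μ k ν + 1 := by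
  rw [torusWeight_eq, torusWeight_eq, sum_range_add_single μ hi]
  push_cast
  ring

theorem torusWeight_add_single_right {j : ℕ} (hj : j < n) :
    torusWeight n μ k (ν + Pi.single j 1) = torusWeight n μ k ν - 1 := by
  rw [torusWeight_eq, torusWeight_eq, sum_range_add_single ν hj, Pi.add_apply,
    Pi.single_eq_of_ne hj.ne']
  push_cast
  ring

theorem torusWeight_add_single_right_self :
    torusWeight n μ k (ν + Pi.single n 1) = torusWeight n μ k ν + 2 := by
  have hsum : ∑ i ∈ Finset.range n, (ν + Pi.single n 1 : ℕ → ℕ) i = ∑ i ∈ Finset.range n, ν i :=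
    Finset.sum_congr rfl fun i hi => by
      simp [Pi.single_eq_of_ne (Finset.mem_range.mp hi).ne]
  rw [torusWeight_eq, torusWeight_eq, hsum, Pi.add_apply, Pi.single_eq_same]
  push_cast
  ring

theorem torusWeight_add (c : ℤ) : torusWeight n μ (k + c) ν = torusWeight n μ k ν - 2 * c := by
  rw [torusWeight_eq, torusWeight_eq]
  ring

theorem torusWeight_sub (c : ℤ) : torusWeight n μ (k - c) ν = torusWeight n μ k ν + 2 * c := by
  rw [sub_eq_add_neg, torusWeight_add]
  ring

end Weight

section WeightSpan

variable (R : Type*) {A : Type*} [CommRing R] [Ring A] [Algebra R A]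

def weightSpan (Q P : ℕ → A) (Qinv : A) (n : ℕ) (d : ℤ) : Submodule R A :=
  Submodule.span R {a | ∃ μ k ν, torusWeight n μ k ν = d ∧ a = weylMonomial Q P Qinv n μ k ν}

variable {R} {Q P : ℕ → A} {Qinv : A} {n : ℕ}

theorem weylMonomial_mem_weightSpan (μ : ℕ → ℕ) (k : ℤ) (ν : ℕ → ℕ) :
    weylMonomial Q P Qinv n μ k ν ∈ weightSpan R Q P Qinv n (torusWeight n μ k ν) :=
  Submodule.subset_span ⟨μ, k, ν, rfl, rfl⟩

theorem mul_mem_weightSpan {x : A} {d d' : ℤ}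
    (h : ∀ μ k ν, torusWeight n μ k ν = d →
      x * weylMonomial Q P Qinv n μ k ν ∈ weightSpan R Q P Qinv n d')
    {y : A} (hy : y ∈ weightSpan R Q P Qinv n d) : x * y ∈ weightSpan R Q P Qinv n d' := by
  have hle : weightSpan R Q P Qinv n d ≤
      (weightSpan R Q P Qinv n d').comap (LinearMap.mulLeft R x) :=
    Submodule.span_le.2 fun _ ⟨μ, k, ν, hw, hy⟩ => hy ▸ h μ k ν hw
  exact hle hy

theorem one_mem_weightSpan : (1 : A) ∈ weightSpan R Q P Qinv n 0 :=
  Submodule.subset_span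
    ⟨0, 0, 0, by simp [torusWeight], (weylMonomial_eq_one (fun _ _ => rfl) (fun _ _ => rfl)).symm⟩

namespace LocalizedWeylRelations

variable {y : A} {d : ℤ}

theorem Q_mul_mem_weightSpan (H : LocalizedWeylRelations Q P Qinv n) {i : ℕ} (hi : i < n)
    (hy : y ∈ weightSpan R Q P Qinv n d) : Q i * y ∈ weightSpan R Q P Qinv n (d + 1) :=
  mul_mem_weightSpan (fun μ k ν hw => by
    rw [H.Q_mul_weylMonomial μ k ν hi, ← hw, ← torusWeight_add_single_left μ k ν hi]
    exact weylMonomial_mem_weightSpan _ _ _) hy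

theorem Q_top_mul_mem_weightSpan (H : LocalizedWeylRelations Q P Qinv n)
    (hy : y ∈ weightSpan R Q P Qinv n d) : Q n * y ∈ weightSpan R Q P Qinv n (d - 2) :=
  mul_mem_weightSpan (fun μ k ν hw => by
    rw [H.Q_top_mul_weylMonomial μ k ν, ← hw, ← mul_one 2, ← torusWeight_add]
    exact weylMonomial_mem_weightSpan _ _ _) hy

theorem inv_mul_mem_weightSpan (H : LocalizedWeylRelations Q P Qinv n)
    (hy : y ∈ weightSpan R Q P Qinv n d) : Qinv * y ∈ weightSpan R Q P Qinv n (d + 2) :=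
  mul_mem_weightSpan (fun μ k ν hw => by
    rw [H.inv_mul_weylMonomial μ k ν, ← hw, ← mul_one 2, ← torusWeight_sub]
    exact weylMonomial_mem_weightSpan _ _ _) hy

theorem P_mul_mem_weightSpan (H : LocalizedWeylRelations Q P Qinv n) {j : ℕ} (hj : j < n)
    (hy : y ∈ weightSpan R Q P Qinv n d) : P j * y ∈ weightSpan R Q P Qinv n (d - 1) := by
  refine mul_mem_weightSpan (fun μ k ν hw => ?_) hy
  rw [H.P_mul_weylMonomial μ k ν hj]
  refine add_mem ?_ ?_
  · rw [← hw, ← torusWeight_add_single_right μ k ν hj]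
    exact weylMonomial_mem_weightSpan _ _ _
  · rcases eq_or_ne (μ j) 0 with h0 | h0
    · rw [h0, zero_smul]
      exact zero_mem _
    · obtain ⟨μ', rfl⟩ := exists_eq_add_single h0
      rw [add_tsub_cancel_right, ← hw, torusWeight_add_single_left μ' k ν hj, add_sub_cancel_right]
      exact nsmul_mem (weylMonomial_mem_weightSpan _ _ _) _

theorem P_top_mul_mem_weightSpan (H : LocalizedWeylRelations Q P Qinv n)
    (hy : y ∈ weightSpan R Q P Qinv n d) : P n * y ∈ weightSpan R Q P Qinv n (d + 2) := by
  refine mul_mem_weightSpan (fun μ k ν hw => ?_) hy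
  rw [H.P_top_mul_weylMonomial μ k ν]
  refine add_mem ?_ (zsmul_mem ?_ k)
  · rw [← hw, ← torusWeight_add_single_right_self]
    exact weylMonomial_mem_weightSpan _ _ _
  · rw [← hw, ← mul_one 2, ← torusWeight_sub]
    exact weylMonomial_mem_weightSpan _ _ _

end LocalizedWeylRelations

end WeightSpan

section Generators

variable {R : Type*} {A : Type*} [CommRing R] [Ring A] [Algebra R A]
  {Q P : ℕ → A} {Qinv : A} {n : ℕ}

def invariantGenerators (Q P : ℕ → A) (Qinv : A) (n : ℕ) : Set A :=
  {Q n * P n} ∪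
    {a : A | ∃ i < n, ∃ j < n, a = Q i * P j} ∪
    {a : A | ∃ i < n, ∃ j < n, a = Q i * Q j * Q n} ∪
    {a : A | ∃ i < n, ∃ j < n, a = P i * P j * Qinv}

namespace LocalizedWeylRelations

theorem generator_mul_mem_weightSpan (H : LocalizedWeylRelations Q P Qinv n) {g y : A}
    (hg : g ∈ invariantGenerators Q P Qinv n) (hy : y ∈ weightSpan R Q P Qinv n 0) :
    g * y ∈ weightSpan R Q P Qinv n 0 := by
  rcases hg with ((rfl | ⟨i, hi, j, hj, rfl⟩) | ⟨i, hi, j, hj, rfl⟩) | ⟨i, hi, j, hj, rfl⟩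
  · simpa [mul_assoc] using H.Q_top_mul_mem_weightSpan (H.P_top_mul_mem_weightSpan hy)
  · simpa [mul_assoc] using H.Q_mul_mem_weightSpan hi (H.P_mul_mem_weightSpan hj hy)
  · simpa [mul_assoc] using
      H.Q_mul_mem_weightSpan hi (H.Q_mul_mem_weightSpan hj (H.Q_top_mul_mem_weightSpan hy))
  · simpa [mul_assoc] using
      H.P_mul_mem_weightSpan hi (H.P_mul_mem_weightSpan hj (H.inv_mul_mem_weightSpan hy))

theorem adjoin_le_weightSpan (H : LocalizedWeylRelations Q P Qinv n) :
    (Algebra.adjoin R (invariantGenerators Q P Qinv n)).toSubmodule ≤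
      weightSpan R Q P Qinv n 0 := by
  rw [Algebra.adjoin_eq_span, Submodule.span_le]
  intro x hx
  induction hx using Submonoid.closure_induction_left with
  | one => exact one_mem_weightSpan
  | mul_left g hg y _ hy => exact H.generator_mul_mem_weightSpan hg hy

end LocalizedWeylRelations

end Generators

def weylDegree (n : ℕ) (μ ν : ℕ → ℕ) : ℕ :=
  ∑ i ∈ Finset.range n, μ i + ∑ i ∈ Finset.range (n + 1), ν i

theorem weylDegree_add_single_left {n i : ℕ} (μ ν : ℕ → ℕ) (hi : i < n) :
    weylDegree n (μ + Pi.single i 1) ν = weylDegree n μ ν + 1 := by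
  rw [weylDegree, weylDegree, sum_range_add_single μ hi]
  ring

theorem weylDegree_add_single_right {n j : ℕ} (μ ν : ℕ → ℕ) (hj : j ≤ n) :
    weylDegree n μ (ν + Pi.single j 1) = weylDegree n μ ν + 1 := by
  rw [weylDegree, weylDegree, sum_range_add_single ν (Nat.lt_succ_of_le hj)]
  ring

section Spanning

variable {R : Type*} {A : Type*} [CommRing R] [Ring A] [Algebra R A]
  {Q P : ℕ → A} {Qinv : A} {n : ℕ}

namespace LocalizedWeylRelations

theorem weylMonomial_mem_adjoin_of_Q_P (H : LocalizedWeylRelations Q P Qinv n) {i j : ℕ}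
    (hi : i < n) (hj : j < n) {μ ν : ℕ → ℕ} {k : ℤ}
    (hw : torusWeight n (μ + Pi.single i 1) k (ν + Pi.single j 1) = 0)
    (ih : ∀ μ' k' ν', weylDegree n μ' ν' < weylDegree n (μ + Pi.single i 1) (ν + Pi.single j 1) →
      torusWeight n μ' k' ν' = 0 →
        weylMonomial Q P Qinv n μ' k' ν' ∈ Algebra.adjoin R (invariantGenerators Q P Qinv n)) :
    weylMonomial Q P Qinv n (μ + Pi.single i 1) k (ν + Pi.single j 1) ∈
      Algebra.adjoin R (invariantGenerators Q P Qinv n) := by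
  have hdeg := weylDegree_add_single_left μ (ν + Pi.single j 1) hi
  rw [weylDegree_add_single_right μ ν hj.le] at hdeg
  rw [torusWeight_add_single_left _ _ _ hi, torusWeight_add_single_right _ _ _ hj] at hw
  have key : (Q i * P j) * weylMonomial Q P Qinv n μ k ν =
      weylMonomial Q P Qinv n (μ + Pi.single i 1) k (ν + Pi.single j 1) +
        μ j • weylMonomial Q P Qinv n (μ - Pi.single j 1 + Pi.single i 1) k ν := by
    rw [mul_assoc, H.P_mul_weylMonomial _ _ _ hj, mul_add, mul_smul_comm,
      H.Q_mul_weylMonomial _ _ _ hi, H.Q_mul_weylMonomial _ _ _ hi]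
  rw [eq_sub_of_add_eq key.symm]
  refine sub_mem (mul_mem (Algebra.subset_adjoin (.inl (.inl (.inr ⟨i, hi, j, hj, rfl⟩))))
    (ih μ k ν (by omega) (by omega))) ?_
  rcases eq_or_ne (μ j) 0 with h0 | h0
  · rw [h0, zero_smul]
    exact zero_mem _
  · obtain ⟨μ', rfl⟩ := exists_eq_add_single h0
    rw [weylDegree_add_single_left _ _ hj] at hdeg
    rw [torusWeight_add_single_left _ _ _ hj] at hw
    refine nsmul_mem (ih _ k ν ?_ ?_) _
    · rw [add_tsub_cancel_right, weylDegree_add_single_left _ _ hi]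
      omega
    · rw [add_tsub_cancel_right, torusWeight_add_single_left _ _ _ hi]
      omega

theorem weylMonomial_mem_adjoin_of_Q_Q (H : LocalizedWeylRelations Q P Qinv n) {i : ℕ}
    (hi : i < n) {μ ν : ℕ → ℕ} {k : ℤ} (hν : ∀ j < n, ν j = 0)
    (hw : torusWeight n (μ + Pi.single i 1) k ν = 0)
    (ih : ∀ μ' k' ν', weylDegree n μ' ν' < weylDegree n (μ + Pi.single i 1) ν →
      torusWeight n μ' k' ν' = 0 →
        weylMonomial Q P Qinv n μ' k' ν' ∈ Algebra.adjoin R (invariantGenerators Q P Qinv n)) :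
    weylMonomial Q P Qinv n (μ + Pi.single i 1) k ν ∈
      Algebra.adjoin R (invariantGenerators Q P Qinv n) := by
  have hνsum : ∑ l ∈ Finset.range n, ν l = 0 :=
    Finset.sum_eq_zero fun l hl => hν l (Finset.mem_range.mp hl)
  -- the `Q`-degree is even, so a second `Q j` can be split off
  have hμsum : ∑ l ∈ Finset.range n, μ l ≠ 0 := by
    rw [torusWeight_eq, sum_range_add_single μ hi, hνsum] at hw
    omega
  obtain ⟨j, hj, hμj⟩ := Finset.exists_ne_zero_of_sum_ne_zero hμsum
  rw [Finset.mem_range] at hj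
  obtain ⟨μ', rfl⟩ := exists_eq_add_single hμj
  have key : (Q i * Q j * Q n) * weylMonomial Q P Qinv n μ' (k - 1) ν =
      weylMonomial Q P Qinv n (μ' + Pi.single j 1 + Pi.single i 1) k ν := by
    rw [mul_assoc, mul_assoc, H.Q_top_mul_weylMonomial, sub_add_cancel,
      H.Q_mul_weylMonomial _ _ _ hj, H.Q_mul_weylMonomial _ _ _ hi]
  rw [← key]
  refine mul_mem (Algebra.subset_adjoin (.inl (.inr ⟨i, hi, j, hj, rfl⟩))) (ih _ _ _ ?_ ?_)
  · rw [weylDegree_add_single_left _ _ hi, weylDegree_add_single_left _ _ hj]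
    omega
  · rw [torusWeight_add_single_left _ _ _ hi, torusWeight_add_single_left _ _ _ hj] at hw
    rw [torusWeight_sub, ← hw]
    ring

theorem weylMonomial_mem_adjoin_of_P_P (H : LocalizedWeylRelations Q P Qinv n) {j : ℕ}
    (hj : j < n) {μ ν : ℕ → ℕ} {k : ℤ} (hμ : ∀ i < n, μ i = 0)
    (hw : torusWeight n μ k (ν + Pi.single j 1) = 0)
    (ih : ∀ μ' k' ν', weylDegree n μ' ν' < weylDegree n μ (ν + Pi.single j 1) →
      torusWeight n μ' k' ν' = 0 →
        weylMonomial Q P Qinv n μ' k' ν' ∈ Algebra.adjoin R (invariantGenerators Q P Qinv n)) :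
    weylMonomial Q P Qinv n μ k (ν + Pi.single j 1) ∈
      Algebra.adjoin R (invariantGenerators Q P Qinv n) := by
  have hμsum : ∑ l ∈ Finset.range n, μ l = 0 :=
    Finset.sum_eq_zero fun l hl => hμ l (Finset.mem_range.mp hl)
  -- the `P`-degree is even, so a second `P j'` can be split off
  have hνsum : ∑ l ∈ Finset.range n, ν l ≠ 0 := by
    rw [torusWeight_eq, sum_range_add_single ν hj, hμsum, Pi.add_apply,
      Pi.single_eq_of_ne hj.ne'] at hw
    omega
  obtain ⟨j', hj', hνj'⟩ := Finset.exists_ne_zero_of_sum_ne_zero hνsum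
  rw [Finset.mem_range] at hj'
  obtain ⟨ν', rfl⟩ := exists_eq_add_single hνj'
  have key : (P j * P j' * Qinv) * weylMonomial Q P Qinv n μ (k + 1) ν' =
      weylMonomial Q P Qinv n μ k (ν' + Pi.single j' 1 + Pi.single j 1) := by
    rw [mul_assoc, mul_assoc, H.inv_mul_weylMonomial, add_sub_cancel_right,
      H.P_mul_weylMonomial _ _ _ hj', hμ j' hj', zero_smul, add_zero,
      H.P_mul_weylMonomial _ _ _ hj, hμ j hj, zero_smul, add_zero]
  rw [← key]
  refine mul_mem (Algebra.subset_adjoin (.inr ⟨j, hj, j', hj', rfl⟩)) (ih _ _ _ ?_ ?_)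
  · rw [weylDegree_add_single_right _ _ hj.le, weylDegree_add_single_right _ _ hj'.le]
    omega
  · rw [torusWeight_add_single_right _ _ _ hj, torusWeight_add_single_right _ _ _ hj'] at hw
    rw [torusWeight_add, ← hw]
    ring

theorem weylMonomial_mem_adjoin_of_Q_top_P_top (H : LocalizedWeylRelations Q P Qinv n)
    {μ ν : ℕ → ℕ} {k : ℤ} (hw : torusWeight n μ k (ν + Pi.single n 1) = 0)
    (ih : ∀ μ' k' ν', weylDegree n μ' ν' < weylDegree n μ (ν + Pi.single n 1) →
      torusWeight n μ' k' ν' = 0 →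
        weylMonomial Q P Qinv n μ' k' ν' ∈ Algebra.adjoin R (invariantGenerators Q P Qinv n)) :
    weylMonomial Q P Qinv n μ k (ν + Pi.single n 1) ∈
      Algebra.adjoin R (invariantGenerators Q P Qinv n) := by
  have key : (Q n * P n) * weylMonomial Q P Qinv n μ (k - 1) ν =
      weylMonomial Q P Qinv n μ k (ν + Pi.single n 1) +
        (k - 1) • weylMonomial Q P Qinv n μ (k - 1) ν := by
    rw [mul_assoc, H.P_top_mul_weylMonomial, mul_add, mul_smul_comm, H.Q_top_mul_weylMonomial,
      H.Q_top_mul_weylMonomial, sub_add_cancel, sub_add_cancel]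
  have hmem : weylMonomial Q P Qinv n μ (k - 1) ν ∈
      Algebra.adjoin R (invariantGenerators Q P Qinv n) := by
    refine ih _ _ _ ?_ ?_
    · rw [weylDegree_add_single_right _ _ le_rfl]
      omega
    · rw [torusWeight_add_single_right_self] at hw
      rw [torusWeight_sub, ← hw]
      ring
  rw [eq_sub_of_add_eq key.symm]
  exact sub_mem (mul_mem (Algebra.subset_adjoin (.inl (.inl (.inl rfl)))) hmem) (zsmul_mem hmem _)

theorem weylMonomial_mem_adjoin (H : LocalizedWeylRelations Q P Qinv n) {μ ν : ℕ → ℕ} {k : ℤ}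
    (hw : torusWeight n μ k ν = 0) :
    weylMonomial Q P Qinv n μ k ν ∈ Algebra.adjoin R (invariantGenerators Q P Qinv n) := by
  induction hN : weylDegree n μ ν using Nat.strong_induction_on generalizing μ k ν with
  | _ N ih =>
  replace ih : ∀ μ' k' ν', weylDegree n μ' ν' < weylDegree n μ ν → torusWeight n μ' k' ν' = 0 →
      weylMonomial Q P Qinv n μ' k' ν' ∈ Algebra.adjoin R (invariantGenerators Q P Qinv n) :=
    fun μ' k' ν' hlt hw' => ih _ (hN ▸ hlt) hw' rfl
  by_cases hμ : ∀ i < n, μ i = 0 <;> by_cases hν : ∀ j < n, ν j = 0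
  · rcases eq_or_ne (ν n) 0 with hνn | hνn
    · have hk : k = 0 := by
        rw [torusWeight_eq, Finset.sum_eq_zero fun l hl => hμ l (Finset.mem_range.mp hl),
          Finset.sum_eq_zero fun l hl => hν l (Finset.mem_range.mp hl), hνn] at hw
        omega
      rw [hk, weylMonomial_eq_one hμ fun j hj =>
        (Nat.lt_succ_iff_lt_or_eq.mp hj).elim (hν j) (· ▸ hνn)]
      exact one_mem _
    · obtain ⟨ν', rfl⟩ := exists_eq_add_single hνn
      exact H.weylMonomial_mem_adjoin_of_Q_top_P_top hw ih
  · push Not at hν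
    obtain ⟨j, hj, hνj⟩ := hν
    obtain ⟨ν', rfl⟩ := exists_eq_add_single hνj
    exact H.weylMonomial_mem_adjoin_of_P_P hj hμ hw ih
  · push Not at hμ
    obtain ⟨i, hi, hμi⟩ := hμ
    obtain ⟨μ', rfl⟩ := exists_eq_add_single hμi
    exact H.weylMonomial_mem_adjoin_of_Q_Q hi hν hw ih
  · push Not at hμ hν
    obtain ⟨i, hi, hμi⟩ := hμ
    obtain ⟨j, hj, hνj⟩ := hν
    obtain ⟨μ', rfl⟩ := exists_eq_add_single hμi
    obtain ⟨ν', rfl⟩ := exists_eq_add_single hνj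
    exact H.weylMonomial_mem_adjoin_of_Q_P hi hj hw ih

theorem weightSpan_le_adjoin (H : LocalizedWeylRelations Q P Qinv n) :
    weightSpan R Q P Qinv n 0 ≤ (Algebra.adjoin R (invariantGenerators Q P Qinv n)).toSubmodule :=
  Submodule.span_le.2 fun _ ⟨_, _, _, hw, ha⟩ => ha ▸ H.weylMonomial_mem_adjoin hw

end LocalizedWeylRelations

end Spanning

/-- Indexing is `0`-based: the paper's `Q_i, P_i` (`1 ≤ i ≤ n`) are `Q (i - 1), P (i - 1)`, and
`Q_{n+1}, P_{n+1}` are `Q n, P n`. -/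
theorem stmt11_general (n : ℕ) (A : Type*) [Ring A] [Algebra ℂ A]
    (Q P : ℕ → A) (Qinv : A)
    (hPQ : ∀ i ≤ n, ∀ j ≤ n, P i * Q j - Q j * P i = if i = j then 1 else 0)
    (hQQ : ∀ i ≤ n, ∀ j ≤ n, Q i * Q j = Q j * Q i)
    (hPP : ∀ i ≤ n, ∀ j ≤ n, P i * P j = P j * P i)
    (hinv : Q n * Qinv = 1) (hinv' : Qinv * Q n = 1) :
    (Algebra.adjoin ℂ
      ({Q n * P n} ∪
        {a : A | ∃ i < n, ∃ j < n, a = Q i * P j} ∪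
        {a : A | ∃ i < n, ∃ j < n, a = Q i * Q j * Q n} ∪
        {a : A | ∃ i < n, ∃ j < n, a = P i * P j * Qinv})).toSubmodule =
    Submodule.span ℂ
      {a : A | ∃ (μ : ℕ → ℕ) (k : ℤ) (ν : ℕ → ℕ),
        ((∑ i ∈ Finset.range n, ((μ i : ℤ) - (ν i : ℤ))) -
          2 * (k - (ν n : ℤ)) = 0) ∧
        a = ((List.range n).map fun i => Q i ^ μ i).prod *
            zmonPow (Q n) Qinv k *
            ((List.range (n + 1)).map fun i => P i ^ ν i).prod} := by
  have H : LocalizedWeylRelations Q P Qinv n := ⟨hPQ, hQQ, hPP, hinv, hinv'⟩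
  exact le_antisymm H.adjoin_le_weightSpan H.weightSpan_le_adjoin

/-- In the localized Weyl algebra `A_{n+1}(ℂ)[Q_{n+1}^{-1}]`
(0-based indexing: the paper's `Q_i` is `Q (i-1)`, `Q_{n+1}` is `Q n`, with
inverse `Qinv`), the ℂ-span `𝒟` of the differential monomials `Q^μ P^ν` with
`μ ∈ ℕ^n × ℤ`, `ν ∈ ℕ^{n+1}` and `∑_{i=1}^n (μ_i − ν_i) − 2(μ_{n+1} − ν_{n+1}) = 0`
is generated as a ℂ-algebra by `1` and the elements
`Q_iP_j, Q_{n+1}P_{n+1}, Q_iQ_jQ_{n+1}, P_iP_jQ_{n+1}^{-1}` for `i,j = 1,…,n`. -/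
theorem stmt11 (n : ℕ) (hn : 1 ≤ n) (A : Type*) [Ring A] [Algebra ℂ A]
    (Q P : ℕ → A) (Qinv : A)
    (hPQ : ∀ i ≤ n, ∀ j ≤ n, P i * Q j - Q j * P i = if i = j then 1 else 0)
    (hQQ : ∀ i ≤ n, ∀ j ≤ n, Q i * Q j = Q j * Q i)
    (hPP : ∀ i ≤ n, ∀ j ≤ n, P i * P j = P j * P i)
    (hinv : Q n * Qinv = 1) (hinv' : Qinv * Q n = 1)
    (hinvQ : ∀ i < n, Commute Qinv (Q i))
    (hinvP : ∀ i < n, Commute Qinv (P i)) :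
    (Algebra.adjoin ℂ
      ({Q n * P n} ∪
        {a : A | ∃ i < n, ∃ j < n, a = Q i * P j} ∪
        {a : A | ∃ i < n, ∃ j < n, a = Q i * Q j * Q n} ∪
        {a : A | ∃ i < n, ∃ j < n, a = P i * P j * Qinv})).toSubmodule =
    Submodule.span ℂ
      {a : A | ∃ (μ : ℕ → ℕ) (k : ℤ) (ν : ℕ → ℕ),
        ((∑ i ∈ Finset.range n, ((μ i : ℤ) - (ν i : ℤ))) -
          2 * (k - (ν n : ℤ)) = 0) ∧
        a = ((List.range n).map fun i => Q i ^ μ i).prod *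
            zmonPow (Q n) Qinv k *
            ((List.range (n + 1)).map fun i => P i ^ ν i).prod} :=
  stmt11_general n A Q P Qinv hPQ hQQ hPP hinv hinv'
end

section
/- Let 𝒟_ℓ be the ℂ-span inside the Weyl algebra A_{n+1}(ℂ) of differential monomials Q^μP^ν with μ, ν ∈ ℕ^{n+1} satisfying Σ_{i=1}^n(μ_i − ν_i) − 2(μ_{n+1} − ν_{n+1}) = 0. Then 𝒟_ℓ is generated as a ℂ-algebra by 1 and the elements Q_iP_j, Q_{n+1}P_{n+1}, Q_iQ_jQ_{n+1}, P_iP_jP_{n+1} for i,j = 1,…,n. -/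
set_option linter.unusedSectionVars false
set_option maxHeartbeats 1000000
namespace St12

def ee (i : ℕ) : ℕ → ℕ := fun j => if j = i then 1 else 0

variable {A : Type*} [Ring A] [Algebra ℂ A]

lemma ee_self (i : ℕ) : ee i i = 1 := by simp [ee]

lemma ee_ne {i j : ℕ} (h : j ≠ i) : ee i j = 0 := by simp [ee, h]

def pr (f : ℕ → A) (μ : ℕ → ℕ) (k : ℕ) : A :=
  ((List.range k).map fun i => f i ^ μ i).prod

lemma pr_succ (f : ℕ → A) (μ k) : pr f μ (k+1) = pr f μ k * f k ^ μ k := by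
  simp [pr, List.range_succ]

lemma pr_congr {μ ν : ℕ → ℕ} (f : ℕ → A) (k) (h : ∀ i < k, μ i = ν i) :
    pr f μ k = pr f ν k := by
  induction k with
  | zero => rfl
  | succ k ih =>
    rw [pr_succ, pr_succ, ih (fun i hi => h i (by omega)), h k (by omega)]

lemma pr_one (f : ℕ → A) (μ k) (h : ∀ i < k, μ i = 0) : pr f μ k = 1 := by
  induction k with
  | zero => rfl
  | succ k ih =>
    rw [pr_succ, ih (fun i hi => h i (by omega)), h k (by omega), pow_zero, mul_one]

lemma pr_comm (f : ℕ → A) (μ : ℕ → ℕ) (x : A) :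
    ∀ k, (∀ i < k, Commute x (f i)) → Commute x (pr f μ k)
  | 0, _ => by simp [pr]
  | (k+1), h => by
    rw [pr_succ]
    exact (pr_comm f μ x k fun i hi => h i (by omega)).mul_right
      ((h k (by omega)).pow_right _)

lemma pr_add (f : ℕ → A) (μ ν : ℕ → ℕ) :
    ∀ k, (∀ i < k, ∀ j < k, Commute (f i) (f j)) →
    pr f μ k * pr f ν k = pr f (fun i => μ i + ν i) k
  | 0, _ => by simp [pr]
  | (k+1), h => by
    rw [pr_succ, pr_succ, pr_succ]
    have hc : Commute (f k ^ μ k) (pr f ν k) :=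
      ((pr_comm f ν (f k) k fun i hi => h k (by omega) i (by omega)).pow_left _)
    calc pr f μ k * f k ^ μ k * (pr f ν k * f k ^ ν k)
        = pr f μ k * (f k ^ μ k * pr f ν k) * f k ^ ν k := by noncomm_ring
      _ = pr f μ k * (pr f ν k * f k ^ μ k) * f k ^ ν k := by rw [hc.eq]
      _ = (pr f μ k * pr f ν k) * (f k ^ μ k * f k ^ ν k) := by noncomm_ring
      _ = pr f (fun i => μ i + ν i) k * f k ^ (μ k + ν k) := by
          rw [pr_add f μ ν k fun i hi j hj => h i (by omega) j (by omega), pow_add]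

lemma pr_single (f : ℕ → A) (i : ℕ) : ∀ k, i < k → pr f (ee i) k = f i
  | (k+1), h => by
    rw [pr_succ]
    rcases Nat.lt_or_ge i k with h' | h'
    · rw [pr_single f i k h', show ee i k = 0 by simp [ee]; omega, pow_zero, mul_one]
    · have hik : i = k := by omega
      subst hik
      rw [pr_one f _ i (fun j hj => by simp [ee]; omega), show ee i i = 1 by simp [ee],
        pow_one, one_mul]

lemma sum_ee (i m : ℕ) : ∑ k ∈ Finset.range m, ee i k = if i < m then 1 else 0 := by
  simp [ee, Finset.sum_ite_eq]

lemma sum_ee_int (i m : ℕ) :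
    ∑ k ∈ Finset.range m, ((ee i k : ℕ) : ℤ) = if i < m then 1 else 0 := by
  simp [ee, Finset.sum_ite_eq, apply_ite (Nat.cast : ℕ → ℤ)]

lemma pq_pow (n : ℕ) (Q P : ℕ → A)
    (hPQ : ∀ i ≤ n, ∀ j ≤ n, P i * Q j - Q j * P i = if i = j then 1 else 0)
    {i j : ℕ} (hi : i ≤ n) (hj : j ≤ n) :
    ∀ m : ℕ, P i * Q j ^ m =
      Q j ^ m * P i + if i = j then (m : ℂ) • Q j ^ (m-1) else 0
  | 0 => by simp
  | (m+1) => by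
    have base : P i * Q j = Q j * P i + (if i = j then 1 else 0) := by
      rw [← hPQ i hi j hj]; abel
    have ih := pq_pow n Q P hPQ hi hj m
    by_cases h : i = j
    · subst h
      rw [if_pos rfl] at ih ⊢
      calc P i * Q i ^ (m+1) = (P i * Q i ^ m) * Q i := by rw [pow_succ, mul_assoc]
        _ = (Q i ^ m * P i + (m : ℂ) • Q i ^ (m-1)) * Q i := by rw [ih]
        _ = Q i ^ m * (P i * Q i) + (m : ℂ) • (Q i ^ (m-1) * Q i) := by
            rw [add_mul, mul_assoc, smul_mul_assoc]
        _ = Q i ^ (m+1) * P i + (Q i ^ m + (m : ℂ) • (Q i ^ (m-1) * Q i)) := by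
            rw [base, if_pos rfl, mul_add, mul_one, ← mul_assoc, ← pow_succ, add_assoc]
        _ = Q i ^ (m+1) * P i + ((m+1 : ℕ) : ℂ) • Q i ^ ((m+1)-1) := by
            congr 1
            cases m with
            | zero => simp
            | succ m =>
              rw [← pow_succ, Nat.succ_sub_one, Nat.succ_sub_one]
              push_cast
              module
    · rw [if_neg h] at ih ⊢
      rw [if_neg h] at *
      calc P i * Q j ^ (m+1) = (P i * Q j ^ m) * Q j := by rw [pow_succ, mul_assoc]
        _ = (Q j ^ m * P i + 0) * Q j := by rw [ih]
        _ = Q j ^ m * (P i * Q j) := by rw [add_zero, mul_assoc]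
        _ = Q j ^ (m+1) * P i + 0 := by
            rw [base, add_zero, add_zero, ← mul_assoc, ← pow_succ]
  termination_by m => m


lemma pq_pr (n : ℕ) (Q P : ℕ → A)
    (hPQ : ∀ i ≤ n, ∀ j ≤ n, P i * Q j - Q j * P i = if i = j then 1 else 0)
    {i : ℕ} (hi : i ≤ n) (μ : ℕ → ℕ) :
    ∀ k, k ≤ n+1 → P i * pr Q μ k =
      pr Q μ k * P i + if i < k then (μ i : ℂ) • pr Q (fun j => μ j - ee i j) k else 0
  | 0, _ => by simp [pr]
  | (k+1), hk => by
    have hkn : k ≤ n := by omega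
    have ih := pq_pr n Q P hPQ hi μ k (by omega)
    have e1 : P i * pr Q μ (k+1) = pr Q μ (k+1) * P i +
        (pr Q μ k * (if i = k then (μ k : ℂ) • Q k ^ (μ k - 1) else 0) +
         (if i < k then (μ i : ℂ) • pr Q (fun j => μ j - ee i j) k else 0) * Q k ^ μ k) := by
      calc P i * pr Q μ (k+1) = (P i * pr Q μ k) * Q k ^ μ k := by
            rw [pr_succ, mul_assoc]
        _ = (pr Q μ k * P i) * Q k ^ μ k +
            (if i < k then (μ i : ℂ) • pr Q (fun j => μ j - ee i j) k else 0) * Q k ^ μ k := by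
            rw [ih, add_mul]
        _ = pr Q μ k * (Q k ^ μ k * P i + if i = k then (μ k : ℂ) • Q k ^ (μ k - 1) else 0) +
            (if i < k then (μ i : ℂ) • pr Q (fun j => μ j - ee i j) k else 0) * Q k ^ μ k := by
            rw [mul_assoc, pq_pow n Q P hPQ hi hkn (μ k)]
        _ = _ := by rw [pr_succ, mul_add, ← mul_assoc]; abel
    rw [e1]
    congr 1
    rcases Nat.lt_trichotomy i k with h | h | h
    · rw [if_neg (by omega : ¬ i = k), mul_zero, zero_add, if_pos h,
        if_pos (by omega : i < k+1), smul_mul_assoc, pr_succ]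
      congr 3
      simp only [ee]
      rw [if_neg (by omega : ¬ k = i), Nat.sub_zero]
    · subst h
      rw [if_pos rfl, if_neg (by omega : ¬ i < i), zero_mul, add_zero,
        if_pos (by omega : i < i+1), mul_smul_comm, pr_succ,
        pr_congr Q i (μ := μ) (ν := fun j => μ j - ee i j) (fun j hj => by
          simp only [ee]; rw [if_neg (by omega : ¬ j = i), Nat.sub_zero])]
      congr 2
      simp [ee]
    · rw [if_neg (by omega : ¬ i = k), if_neg (by omega : ¬ i < k),
        if_neg (by omega : ¬ i < k+1), mul_zero, zero_mul, add_zero]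


variable (n : ℕ) (Q P : ℕ → A)

def Mn (μ ν : ℕ → ℕ) : A := pr Q μ (n+1) * pr P ν (n+1)

def Tset (δ : ℕ → ℤ) : Set A :=
  {a | ∃ α β : ℕ → ℕ, (∀ i < n+1, (α i : ℤ) - β i = δ i) ∧ a = Mn n Q P α β}

lemma cast_sum_sub (μ σ : ℕ → ℕ) (m : ℕ) (h : ∀ k < m, σ k ≤ μ k) :
    ∑ k ∈ Finset.range m, ((μ k - σ k : ℕ) : ℤ) =
      ∑ k ∈ Finset.range m, (μ k : ℤ) - ∑ k ∈ Finset.range m, (σ k : ℤ) := by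
  rw [← Finset.sum_sub_distrib]
  exact Finset.sum_congr rfl fun k hk => by
    have := h k (Finset.mem_range.mp hk); omega

lemma nat_sum_sub (μ σ : ℕ → ℕ) (m : ℕ) (h : ∀ k < m, σ k ≤ μ k) :
    ∑ k ∈ Finset.range m, (μ k - σ k) + ∑ k ∈ Finset.range m, σ k
      = ∑ k ∈ Finset.range m, μ k := by
  rw [← Finset.sum_add_distrib]
  exact Finset.sum_congr rfl fun k hk => by
    have := h k (Finset.mem_range.mp hk); omega

lemma key
    (hPQ : ∀ i ≤ n, ∀ j ≤ n, P i * Q j - Q j * P i = if i = j then 1 else 0)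
    (hQQ : ∀ i ≤ n, ∀ j ≤ n, Q i * Q j = Q j * Q i)
    (hPP : ∀ i ≤ n, ∀ j ≤ n, P i * P j = P j * P i)
    (δ : ℕ → ℤ) :
    ∀ s : ℕ, ∀ μ ν μ' ν' : ℕ → ℕ,
      (∀ i < n+1, δ i = (μ i : ℤ) + μ' i - ν i - ν' i) →
      (∑ i ∈ Finset.range (n+1), ν i) = s →
      Mn n Q P μ ν * Mn n Q P μ' ν' ∈ Submodule.span ℂ (Tset n Q P δ) := by
  have hQc : ∀ a < n+1, ∀ b < n+1, Commute (Q a) (Q b) :=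
    fun a ha b hb => hQQ a (by omega) b (by omega)
  have hPc : ∀ a < n+1, ∀ b < n+1, Commute (P a) (P b) :=
    fun a ha b hb => hPP a (by omega) b (by omega)
  intro s
  induction s using Nat.strong_induction_on with
  | _ s ih =>
  intro μ ν μ' ν' hδ hs
  by_cases h0 : ∀ i < n+1, ν i = 0
  · have hP1 : pr P ν (n+1) = 1 := pr_one _ _ _ h0
    have hQadd : pr Q μ (n+1) * pr Q μ' (n+1) = pr Q (fun i => μ i + μ' i) (n+1) :=
      pr_add Q μ μ' (n+1) hQc
    have heq : Mn n Q P μ ν * Mn n Q P μ' ν' = Mn n Q P (fun i => μ i + μ' i) ν' := by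
      unfold Mn
      rw [hP1, mul_one, ← mul_assoc, hQadd]
    rw [heq]
    exact Submodule.subset_span ⟨_, ν', fun i hi => by
      have h1 := hδ i hi; have h2 := h0 i hi; push_cast; omega, rfl⟩
  · push_neg at h0
    obtain ⟨i, hi, hνi⟩ := h0
    set ν₁ : ℕ → ℕ := fun j => ν j - ee i j with hν₁
    have hee_le : ∀ k < n+1, ee i k ≤ ν k := fun k hk => by
      by_cases h : k = i
      · subst h; rw [ee_self]; omega
      · rw [ee_ne h]; omega
    have hsplit : pr P ν (n+1) = pr P ν₁ (n+1) * P i := by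
      rw [show P i = pr P (ee i) (n+1) from (pr_single P i (n+1) (by omega)).symm,
        pr_add P ν₁ (ee i) (n+1) hPc]
      exact (pr_congr P (n+1) fun k hk => by
        have := hee_le k hk
        show ν k - ee i k + ee i k = ν k
        omega).symm
    have hPiQ : P i * pr Q μ' (n+1) =
        pr Q μ' (n+1) * P i + (μ' i : ℂ) • pr Q (fun j => μ' j - ee i j) (n+1) := by
      have h := pq_pr n Q P hPQ (by omega : i ≤ n) μ' (n+1) le_rfl
      rwa [if_pos (by omega : i < n+1)] at h
    have hPiP : P i * pr P ν' (n+1) = pr P (fun j => ee i j + ν' j) (n+1) := by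
      rw [show P i = pr P (ee i) (n+1) from (pr_single P i (n+1) (by omega)).symm]
      exact pr_add P (ee i) ν' (n+1) hPc
    have eqn : Mn n Q P μ ν * Mn n Q P μ' ν' =
        Mn n Q P μ ν₁ * Mn n Q P μ' (fun j => ee i j + ν' j)
        + (μ' i : ℂ) • (Mn n Q P μ ν₁ * Mn n Q P (fun j => μ' j - ee i j) ν') := by
      unfold Mn
      rw [hsplit]
      have step1 : pr Q μ (n+1) * (pr P ν₁ (n+1) * P i) * (pr Q μ' (n+1) * pr P ν' (n+1))
          = pr Q μ (n+1) * pr P ν₁ (n+1) * ((P i * pr Q μ' (n+1)) * pr P ν' (n+1)) := by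
        noncomm_ring
      rw [step1, hPiQ, add_mul, smul_mul_assoc, mul_add, mul_smul_comm,
        mul_assoc (pr Q μ' (n+1)), hPiP]
    have hsum1 : ∑ k ∈ Finset.range (n+1), ν₁ k < s := by
      have h1 := nat_sum_sub ν (ee i) (n+1) hee_le
      have h2 := sum_ee i (n+1)
      rw [if_pos (by omega : i < n+1)] at h2
      have h3 : ν i ≤ ∑ k ∈ Finset.range (n+1), ν k :=
        Finset.single_le_sum (f := fun k => ν k) (fun k _ => Nat.zero_le _)
          (Finset.mem_range.mpr hi)
      have h4 : ∑ k ∈ Finset.range (n+1), ν₁ k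
          = ∑ k ∈ Finset.range (n+1), (ν k - ee i k) := rfl
      omega
    have hν₁cast : ∀ k < n+1, ((ν₁ k : ℕ) : ℤ) = (ν k : ℤ) - ee i k := fun k hk => by
      have := hee_le k hk
      show ((ν k - ee i k : ℕ) : ℤ) = (ν k : ℤ) - (ee i k : ℤ)
      omega
    rw [eqn]
    refine add_mem ?_ ?_
    · refine ih _ hsum1 μ ν₁ μ' (fun j => ee i j + ν' j) (fun k hk => ?_) rfl
      have h1 := hδ k hk
      have h2 := hν₁cast k hk
      show δ k = (μ k : ℤ) + (μ' k : ℤ) - ((ν k - ee i k : ℕ) : ℤ) - ((ee i k + ν' k : ℕ) : ℤ)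
      push_cast
      omega
    · by_cases hc : μ' i = 0
      · simp [hc]
      · refine Submodule.smul_mem _ _
          (ih _ hsum1 μ ν₁ (fun j => μ' j - ee i j) ν' (fun k hk => ?_) rfl)
        have h1 := hδ k hk
        have h2 := hν₁cast k hk
        have h3 : ((μ' k - ee i k : ℕ) : ℤ) = (μ' k : ℤ) - ee i k := by
          by_cases hki : k = i
          · subst hki; rw [ee_self]; omega
          · rw [ee_ne hki]; simp
        show δ k = (μ k : ℤ) + ((μ' k - ee i k : ℕ) : ℤ) - ((ν k - ee i k : ℕ) : ℤ) - (ν' k : ℤ)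
        omega

lemma gen
    (hPQ : ∀ i ≤ n, ∀ j ≤ n, P i * Q j - Q j * P i = if i = j then 1 else 0)
    (hQQ : ∀ i ≤ n, ∀ j ≤ n, Q i * Q j = Q j * Q i)
    (hPP : ∀ i ≤ n, ∀ j ≤ n, P i * P j = P j * P i)
    (R : Subalgebra ℂ A)
    (hg1 : Q n * P n ∈ R)
    (hg2 : ∀ i < n, ∀ j < n, Q i * P j ∈ R)
    (hg3 : ∀ i < n, ∀ j < n, Q i * Q j * Q n ∈ R)
    (hg4 : ∀ i < n, ∀ j < n, P i * P j * P n ∈ R) :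
    ∀ N : ℕ, ∀ μ ν : ℕ → ℕ,
      (∑ k ∈ Finset.range (n+1), (μ k + ν k)) = N →
      ((∑ k ∈ Finset.range n, ((μ k : ℤ) - (ν k : ℤ))) - 2 * ((μ n : ℤ) - (ν n : ℤ)) = 0) →
      Mn n Q P μ ν ∈ R := by
  have hQc : ∀ a < n+1, ∀ b < n+1, Commute (Q a) (Q b) :=
    fun a ha b hb => hQQ a (by omega) b (by omega)
  have hPc : ∀ a < n+1, ∀ b < n+1, Commute (P a) (P b) :=
    fun a ha b hb => hPP a (by omega) b (by omega)
  intro N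
  induction N using Nat.strong_induction_on with
  | _ N ih =>
  intro μ ν hsum hd
  have hdz : (∑ k ∈ Finset.range n, (μ k : ℤ)) - (∑ k ∈ Finset.range n, (ν k : ℤ))
      - 2 * ((μ n : ℤ) - ν n) = 0 := by
    rw [← Finset.sum_sub_distrib]
    exact hd
  have hsplitN : ∑ k ∈ Finset.range (n+1), (μ k + ν k) =
      (∑ k ∈ Finset.range n, μ k) + μ n + ((∑ k ∈ Finset.range n, ν k) + ν n) := by
    rw [Finset.sum_add_distrib, Finset.sum_range_succ, Finset.sum_range_succ]
  have hcastμ : (∑ k ∈ Finset.range n, (μ k : ℤ)) = ((∑ k ∈ Finset.range n, μ k : ℕ) : ℤ) := by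
    push_cast; rfl
  have hcastν : (∑ k ∈ Finset.range n, (ν k : ℤ)) = ((∑ k ∈ Finset.range n, ν k : ℕ) : ℤ) := by
    push_cast; rfl
  by_cases hz : ∑ k ∈ Finset.range (n+1), (μ k + ν k) = 0
  · have hM1 : Mn n Q P μ ν = 1 := by
      unfold Mn
      rw [pr_one Q μ _ (fun k hk => by
          have := Finset.sum_eq_zero_iff.mp hz k (Finset.mem_range.mpr hk); omega),
        pr_one P ν _ (fun k hk => by
          have := Finset.sum_eq_zero_iff.mp hz k (Finset.mem_range.mpr hk); omega), one_mul]
    rw [hM1]; exact one_mem R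
  -- quadratic step
  have quad : ∀ i j : ℕ, (i < n ∧ j < n ∨ i = n ∧ j = n) → 1 ≤ μ i → 1 ≤ ν j →
      Q i * P j ∈ R → Mn n Q P μ ν ∈ R := by
    intro i j hij hμi hνj hg
    have hin : i ≤ n := by rcases hij with ⟨h,_⟩|⟨h,_⟩ <;> omega
    have hjn : j ≤ n := by rcases hij with ⟨_,h⟩|⟨_,h⟩ <;> omega
    set μ₁ : ℕ → ℕ := fun k => μ k - ee i k with hμ₁def
    set ν₁ : ℕ → ℕ := fun k => ν k - ee j k with hν₁def
    have hle_i : ∀ k < n+1, ee i k ≤ μ k := fun k hk => by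
      by_cases h : k = i
      · subst h; rw [ee_self]; omega
      · rw [ee_ne h]; omega
    have hle_j : ∀ k < n+1, ee j k ≤ ν k := fun k hk => by
      by_cases h : k = j
      · subst h; rw [ee_self]; omega
      · rw [ee_ne h]; omega
    have hPjQ : P j * pr Q μ₁ (n+1) =
        pr Q μ₁ (n+1) * P j + (μ₁ j : ℂ) • pr Q (fun k => μ₁ k - ee j k) (n+1) := by
      have h := pq_pr n Q P hPQ hjn μ₁ (n+1) le_rfl
      rwa [if_pos (by omega : j < n+1)] at h
    have hQμ : Q i * pr Q μ₁ (n+1) = pr Q μ (n+1) := by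
      rw [show Q i = pr Q (ee i) (n+1) from (pr_single Q i (n+1) (by omega)).symm,
        pr_add Q (ee i) μ₁ (n+1) hQc]
      exact pr_congr Q (n+1) fun k hk => by
        have := hle_i k hk
        show ee i k + (μ k - ee i k) = μ k
        omega
    have hPν : P j * pr P ν₁ (n+1) = pr P ν (n+1) := by
      rw [show P j = pr P (ee j) (n+1) from (pr_single P j (n+1) (by omega)).symm,
        pr_add P (ee j) ν₁ (n+1) hPc]
      exact pr_congr P (n+1) fun k hk => by
        have := hle_j k hk
        show ee j k + (ν k - ee j k) = ν k
        omega
    have hQ2 : Q i * pr Q (fun k => μ₁ k - ee j k) (n+1) =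
        pr Q (fun k => ee i k + (μ₁ k - ee j k)) (n+1) := by
      rw [show Q i = pr Q (ee i) (n+1) from (pr_single Q i (n+1) (by omega)).symm]
      exact pr_add Q (ee i) (fun k => μ₁ k - ee j k) (n+1) hQc
    have e0 : Q i * P j * Mn n Q P μ₁ ν₁
        = Mn n Q P μ ν + (μ₁ j : ℂ) •
            (pr Q (fun k => ee i k + (μ₁ k - ee j k)) (n+1) * pr P ν₁ (n+1)) := by
      unfold Mn
      calc Q i * P j * (pr Q μ₁ (n+1) * pr P ν₁ (n+1))
          = Q i * ((P j * pr Q μ₁ (n+1)) * pr P ν₁ (n+1)) := by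
            rw [mul_assoc, ← mul_assoc (P j)]
        _ = Q i * ((pr Q μ₁ (n+1) * P j
              + (μ₁ j : ℂ) • pr Q (fun k => μ₁ k - ee j k) (n+1)) * pr P ν₁ (n+1)) := by
            rw [hPjQ]
        _ = Q i * (pr Q μ₁ (n+1) * (P j * pr P ν₁ (n+1)))
              + (μ₁ j : ℂ) • (Q i * (pr Q (fun k => μ₁ k - ee j k) (n+1) * pr P ν₁ (n+1))) := by
            rw [add_mul, smul_mul_assoc, mul_add, mul_smul_comm, mul_assoc (pr Q μ₁ (n+1))]
        _ = (Q i * pr Q μ₁ (n+1)) * pr P ν (n+1)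
              + (μ₁ j : ℂ) • ((Q i * pr Q (fun k => μ₁ k - ee j k) (n+1)) * pr P ν₁ (n+1)) := by
            rw [hPν, ← mul_assoc, ← mul_assoc]
        _ = pr Q μ (n+1) * pr P ν (n+1)
              + (μ₁ j : ℂ) • (pr Q (fun k => ee i k + (μ₁ k - ee j k)) (n+1) * pr P ν₁ (n+1)) := by
            rw [hQμ, hQ2]
    -- memberships for M(μ₁, ν₁)
    have hmeas1 : ∑ k ∈ Finset.range (n+1), (μ₁ k + ν₁ k) < N := by
      have b1 : ∑ k ∈ Finset.range (n+1), (μ₁ k + ν₁ k)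
          = (∑ k ∈ Finset.range (n+1), μ₁ k) + ∑ k ∈ Finset.range (n+1), ν₁ k :=
        Finset.sum_add_distrib
      have b2 : ∑ k ∈ Finset.range (n+1), μ₁ k
          = ∑ k ∈ Finset.range (n+1), (μ k - ee i k) := rfl
      have b3 : ∑ k ∈ Finset.range (n+1), ν₁ k
          = ∑ k ∈ Finset.range (n+1), (ν k - ee j k) := rfl
      have h6 := nat_sum_sub μ (ee i) (n+1) hle_i
      have h7 := nat_sum_sub ν (ee j) (n+1) hle_j
      have h8 := sum_ee i (n+1); rw [if_pos (by omega : i < n+1)] at h8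
      have h9 := sum_ee j (n+1); rw [if_pos (by omega : j < n+1)] at h9
      have h10 : ∑ k ∈ Finset.range (n+1), (μ k + ν k)
          = (∑ k ∈ Finset.range (n+1), μ k) + ∑ k ∈ Finset.range (n+1), ν k :=
        Finset.sum_add_distrib
      omega
    have hdeg1 : (∑ k ∈ Finset.range n, ((μ₁ k : ℤ) - (ν₁ k : ℤ)))
        - 2 * ((μ₁ n : ℤ) - (ν₁ n : ℤ)) = 0 := by
      rw [Finset.sum_sub_distrib]
      have c1 := cast_sum_sub μ (ee i) n (fun k hk => hle_i k (by omega))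
      have c2 := cast_sum_sub ν (ee j) n (fun k hk => hle_j k (by omega))
      have s1 := sum_ee_int i n
      have s2 := sum_ee_int j n
      have b2 : (∑ k ∈ Finset.range n, ((μ₁ k : ℕ) : ℤ))
          = ∑ k ∈ Finset.range n, ((μ k - ee i k : ℕ) : ℤ) := rfl
      have b3 : (∑ k ∈ Finset.range n, ((ν₁ k : ℕ) : ℤ))
          = ∑ k ∈ Finset.range n, ((ν k - ee j k : ℕ) : ℤ) := rfl
      have c3 : ((μ₁ n : ℕ) : ℤ) = (μ n : ℤ) - (ee i n : ℕ) := by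
        have := hle_i n (by omega)
        show ((μ n - ee i n : ℕ) : ℤ) = (μ n : ℤ) - (ee i n : ℕ)
        omega
      have c4 : ((ν₁ n : ℕ) : ℤ) = (ν n : ℤ) - (ee j n : ℕ) := by
        have := hle_j n (by omega)
        show ((ν n - ee j n : ℕ) : ℤ) = (ν n : ℤ) - (ee j n : ℕ)
        omega
      rcases hij with ⟨hi, hj⟩ | ⟨hi, hj⟩
      · rw [if_pos hi] at s1
        rw [if_pos hj] at s2
        have e1 : ee i n = 0 := ee_ne (by omega)
        have e2 : ee j n = 0 := ee_ne (by omega)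
        rw [Finset.sum_sub_distrib] at hd
        omega
      · rw [if_neg (by omega : ¬ i < n)] at s1
        rw [if_neg (by omega : ¬ j < n)] at s2
        have e1 : ee i n = 1 := by rw [hi]; exact ee_self n
        have e2 : ee j n = 1 := by rw [hj]; exact ee_self n
        rw [Finset.sum_sub_distrib] at hd
        omega
    have hM1 : Mn n Q P μ₁ ν₁ ∈ R := ih _ hmeas1 μ₁ ν₁ rfl hdeg1
    by_cases hc : μ₁ j = 0
    · have : Mn n Q P μ ν = Q i * P j * Mn n Q P μ₁ ν₁ := by
        rw [e0, hc]
        norm_num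
      rw [this]; exact mul_mem hg hM1
    · have hμj1 : 1 ≤ μ j := by
        have : μ₁ j = μ j - ee i j := rfl
        have h2 := hle_i j (by omega)
        omega
      have hfun : (fun k => ee i k + (μ₁ k - ee j k)) = fun k => μ k - ee j k := by
        funext k
        have e1 : μ₁ k = μ k - ee i k := rfl
        have e2 : ee i k ≤ μ k := by
          by_cases h : k = i
          · subst h; rw [ee_self]; omega
          · rw [ee_ne h]; omega
        by_cases h2 : k = j
        · subst h2
          have e3 : μ₁ k ≠ 0 := hc
          rw [ee_self]
          omega
        · rw [ee_ne h2]
          omega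
      rw [hfun] at e0
      have heq : Mn n Q P μ ν = Q i * P j * Mn n Q P μ₁ ν₁
          - (μ₁ j : ℂ) • Mn n Q P (fun k => μ k - ee j k) ν₁ := by
        unfold Mn
        exact eq_sub_iff_add_eq.mpr e0.symm
      have hle_j' : ∀ k < n+1, ee j k ≤ μ k := fun k hk => by
        by_cases h : k = j
        · subst h; rw [ee_self]; omega
        · rw [ee_ne h]; omega
      have hmeas2 : ∑ k ∈ Finset.range (n+1), ((μ k - ee j k) + ν₁ k) < N := by
        have b1 : ∑ k ∈ Finset.range (n+1), ((μ k - ee j k) + ν₁ k)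
            = (∑ k ∈ Finset.range (n+1), (μ k - ee j k))
              + ∑ k ∈ Finset.range (n+1), (ν k - ee j k) :=
          Finset.sum_add_distrib
        have h6 := nat_sum_sub μ (ee j) (n+1) hle_j'
        have h7 := nat_sum_sub ν (ee j) (n+1) hle_j
        have h8 := sum_ee j (n+1); rw [if_pos (by omega : j < n+1)] at h8
        have h10 : ∑ k ∈ Finset.range (n+1), (μ k + ν k)
            = (∑ k ∈ Finset.range (n+1), μ k) + ∑ k ∈ Finset.range (n+1), ν k :=
          Finset.sum_add_distrib
        omega
      have hdeg2 : (∑ k ∈ Finset.range n, (((μ k - ee j k : ℕ) : ℤ) - (ν₁ k : ℤ)))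
          - 2 * (((μ n - ee j n : ℕ) : ℤ) - (ν₁ n : ℤ)) = 0 := by
        rw [Finset.sum_sub_distrib]
        have c1 := cast_sum_sub μ (ee j) n (fun k hk => hle_j' k (by omega))
        have c2 := cast_sum_sub ν (ee j) n (fun k hk => hle_j k (by omega))
        have s2 := sum_ee_int j n
        have b3 : (∑ k ∈ Finset.range n, ((ν₁ k : ℕ) : ℤ))
            = ∑ k ∈ Finset.range n, ((ν k - ee j k : ℕ) : ℤ) := rfl
        have c3 : ((μ n - ee j n : ℕ) : ℤ) = (μ n : ℤ) - (ee j n : ℕ) := by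
          have := hle_j' n (by omega); omega
        have c4 : ((ν₁ n : ℕ) : ℤ) = (ν n : ℤ) - (ee j n : ℕ) := by
          have := hle_j n (by omega)
          show ((ν n - ee j n : ℕ) : ℤ) = (ν n : ℤ) - (ee j n : ℕ)
          omega
        rw [Finset.sum_sub_distrib] at hd
        omega
      have hM2 : Mn n Q P (fun k => μ k - ee j k) ν₁ ∈ R :=
        ih _ hmeas2 (fun k => μ k - ee j k) ν₁ rfl hdeg2
      rw [heq]
      exact sub_mem (mul_mem hg hM1) (Subalgebra.smul_mem R hM2 _)
  -- generic helpers
  have hle3 : ∀ (τ : ℕ → ℕ) i j, i < n → j < n → 1 ≤ τ i → 1 ≤ τ j - ee i j → 1 ≤ τ n →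
      ∀ k < n+1, ee i k + ee j k + ee n k ≤ τ k := by
    intro τ i j hi hj h1 h2 h3 k hk
    by_cases ki : k = i
    · by_cases kj : k = j
      · have e1 : ee i k = 1 := by rw [ki]; exact ee_self i
        have e2 : ee j k = 1 := by rw [kj]; exact ee_self j
        have e3 : ee n k = 0 := ee_ne (by omega)
        have e4 : ee i j = 1 := by rw [show j = i by omega]; exact ee_self i
        have e5 : τ k = τ i := by rw [ki]
        have e6 : τ j = τ i := by rw [show j = i by omega]
        omega
      · have e1 : ee i k = 1 := by rw [ki]; exact ee_self i
        have e2 : ee j k = 0 := ee_ne kj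
        have e3 : ee n k = 0 := ee_ne (by omega)
        have e5 : τ k = τ i := by rw [ki]
        omega
    · by_cases kj : k = j
      · have e1 : ee i k = 0 := ee_ne ki
        have e2 : ee j k = 1 := by rw [kj]; exact ee_self j
        have e3 : ee n k = 0 := ee_ne (by omega)
        have e5 : τ k = τ j := by rw [kj]
        omega
      · by_cases kn : k = n
        · have e1 : ee i k = 0 := ee_ne ki
          have e2 : ee j k = 0 := ee_ne kj
          have e3 : ee n k = 1 := by rw [kn]; exact ee_self n
          have e5 : τ k = τ n := by rw [kn]
          omega
        · have e1 : ee i k = 0 := ee_ne ki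
          have e2 : ee j k = 0 := ee_ne kj
          have e3 : ee n k = 0 := ee_ne kn
          omega
  have hex : ∀ (τ : ℕ → ℕ), 2 ≤ ∑ k ∈ Finset.range n, τ k →
      ∃ i, i < n ∧ 1 ≤ τ i ∧ ∃ j, j < n ∧ 1 ≤ τ j - ee i j := by
    intro τ h2
    have hEi : ∃ i, i < n ∧ 1 ≤ τ i := by
      by_contra hno; push_neg at hno
      have h0 : ∑ k ∈ Finset.range n, τ k = 0 :=
        Finset.sum_eq_zero fun k hk => by
          have := hno k (Finset.mem_range.mp hk); omega
      omega
    obtain ⟨i, hi, hτi⟩ := hEi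
    have hle : ∀ k < n, ee i k ≤ τ k := fun k hk => by
      by_cases h : k = i
      · have e1 : ee i k = 1 := by rw [h]; exact ee_self i
        have e5 : τ k = τ i := by rw [h]
        omega
      · rw [ee_ne h]; omega
    refine ⟨i, hi, hτi, ?_⟩
    by_contra hno; push_neg at hno
    have h5 : ∑ k ∈ Finset.range n, (τ k - ee i k) = 0 :=
      Finset.sum_eq_zero fun k hk => by
        have := hno k (Finset.mem_range.mp hk); omega
    have h6 := nat_sum_sub τ (ee i) n hle
    have h7 := sum_ee i n; rw [if_pos hi] at h7
    omega
  have sig_sum : ∀ i j : ℕ, i < n → j < n →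
      ∑ k ∈ Finset.range (n+1), (ee i k + ee j k + ee n k) = 3 := by
    intro i j hi hj
    rw [Finset.sum_add_distrib, Finset.sum_add_distrib]
    have h8 := sum_ee i (n+1); rw [if_pos (by omega : i < n+1)] at h8
    have h9 := sum_ee j (n+1); rw [if_pos (by omega : j < n+1)] at h9
    have h10 := sum_ee n (n+1); rw [if_pos (by omega : n < n+1)] at h10
    omega
  have sig_sum_int : ∀ i j : ℕ, i < n → j < n →
      ∑ k ∈ Finset.range n, ((ee i k + ee j k + ee n k : ℕ) : ℤ) = 2 := by
    intro i j hi hj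
    have b : ∀ k, ((ee i k + ee j k + ee n k : ℕ) : ℤ)
        = ((ee i k : ℕ) : ℤ) + ((ee j k : ℕ) : ℤ) + ((ee n k : ℕ) : ℤ) := fun k => by
      push_cast; ring
    rw [Finset.sum_congr rfl (fun k _ => b k), Finset.sum_add_distrib,
      Finset.sum_add_distrib]
    have h8 := sum_ee_int i n; rw [if_pos hi] at h8
    have h9 := sum_ee_int j n; rw [if_pos hj] at h9
    have h10 := sum_ee_int n n; rw [if_neg (by omega : ¬ n < n)] at h10
    omega
  have sig_n : ∀ i j : ℕ, i < n → j < n → ee i n + ee j n + ee n n = 1 := by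
    intro i j hi hj
    rw [ee_ne (by omega : (n:ℕ) ≠ i), ee_ne (by omega : (n:ℕ) ≠ j), ee_self]
  -- cubic steps
  have cubicQ : ∀ i j, i < n → j < n → 1 ≤ μ i → 1 ≤ μ j - ee i j → 1 ≤ μ n →
      Mn n Q P μ ν ∈ R := by
    intro i j hi hj hμi hμj hμn
    set σ : ℕ → ℕ := fun k => ee i k + ee j k + ee n k with hσdef
    have hleσ : ∀ k < n+1, σ k ≤ μ k := fun k hk => hle3 μ i j hi hj hμi hμj hμn k hk
    set μ₃ : ℕ → ℕ := fun k => μ k - σ k with hμ₃def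
    have hQ3 : Q i * (Q j * (Q n * pr Q μ₃ (n+1))) = pr Q μ (n+1) := by
      rw [show Q n = pr Q (ee n) (n+1) from (pr_single Q n (n+1) (by omega)).symm,
        pr_add Q (ee n) μ₃ (n+1) hQc,
        show Q j = pr Q (ee j) (n+1) from (pr_single Q j (n+1) (by omega)).symm,
        pr_add Q (ee j) _ (n+1) hQc,
        show Q i = pr Q (ee i) (n+1) from (pr_single Q i (n+1) (by omega)).symm,
        pr_add Q (ee i) _ (n+1) hQc]
      refine pr_congr Q (n+1) fun k hk => ?_
      have h0 := hleσ k hk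
      have e1 : σ k = ee i k + ee j k + ee n k := rfl
      show ee i k + (ee j k + (ee n k + (μ k - σ k))) = μ k
      omega
    have eqc : Q i * Q j * Q n * Mn n Q P μ₃ ν = Mn n Q P μ ν := by
      unfold Mn
      calc Q i * Q j * Q n * (pr Q μ₃ (n+1) * pr P ν (n+1))
          = (Q i * (Q j * (Q n * pr Q μ₃ (n+1)))) * pr P ν (n+1) := by noncomm_ring
        _ = pr Q μ (n+1) * pr P ν (n+1) := by rw [hQ3]
    have hmeas : ∑ k ∈ Finset.range (n+1), (μ₃ k + ν k) < N := by
      have b1 : ∑ k ∈ Finset.range (n+1), (μ₃ k + ν k)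
          = (∑ k ∈ Finset.range (n+1), μ₃ k) + ∑ k ∈ Finset.range (n+1), ν k :=
        Finset.sum_add_distrib
      have b2 : ∑ k ∈ Finset.range (n+1), μ₃ k
          = ∑ k ∈ Finset.range (n+1), (μ k - σ k) := rfl
      have h6 := nat_sum_sub μ σ (n+1) hleσ
      have h7 : ∑ k ∈ Finset.range (n+1), σ k = 3 := sig_sum i j hi hj
      have h10 : ∑ k ∈ Finset.range (n+1), (μ k + ν k)
          = (∑ k ∈ Finset.range (n+1), μ k) + ∑ k ∈ Finset.range (n+1), ν k :=
        Finset.sum_add_distrib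
      omega
    have hdeg : (∑ k ∈ Finset.range n, ((μ₃ k : ℤ) - (ν k : ℤ)))
        - 2 * ((μ₃ n : ℤ) - (ν n : ℤ)) = 0 := by
      rw [Finset.sum_sub_distrib]
      have c1 := cast_sum_sub μ σ n (fun k hk => hleσ k (by omega))
      have b2 : (∑ k ∈ Finset.range n, ((μ₃ k : ℕ) : ℤ))
          = ∑ k ∈ Finset.range n, ((μ k - σ k : ℕ) : ℤ) := rfl
      have cσ : ∑ k ∈ Finset.range n, ((σ k : ℕ) : ℤ) = 2 := sig_sum_int i j hi hj
      have hσn : σ n = 1 := sig_n i j hi hj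
      have c3 : ((μ₃ n : ℕ) : ℤ) = (μ n : ℤ) - 1 := by
        have h0 := hleσ n (by omega)
        show ((μ n - σ n : ℕ) : ℤ) = (μ n : ℤ) - 1
        omega
      rw [Finset.sum_sub_distrib] at hd
      omega
    rw [← eqc]
    exact mul_mem (hg3 i hi j hj) (ih _ hmeas μ₃ ν rfl hdeg)
  have cubicP : ∀ i j, i < n → j < n → (∀ k < n+1, μ k = 0) →
      1 ≤ ν i → 1 ≤ ν j - ee i j → 1 ≤ ν n → Mn n Q P μ ν ∈ R := by
    intro i j hi hj hμ0 hνi hνj hνn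
    set σ : ℕ → ℕ := fun k => ee i k + ee j k + ee n k with hσdef
    have hleσ : ∀ k < n+1, σ k ≤ ν k := fun k hk => hle3 ν i j hi hj hνi hνj hνn k hk
    set ν₃ : ℕ → ℕ := fun k => ν k - σ k with hν₃def
    have hQ1 : pr Q μ (n+1) = 1 := pr_one _ _ _ hμ0
    have hP3 : P i * (P j * (P n * pr P ν₃ (n+1))) = pr P ν (n+1) := by
      rw [show P n = pr P (ee n) (n+1) from (pr_single P n (n+1) (by omega)).symm,
        pr_add P (ee n) ν₃ (n+1) hPc,
        show P j = pr P (ee j) (n+1) from (pr_single P j (n+1) (by omega)).symm,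
        pr_add P (ee j) _ (n+1) hPc,
        show P i = pr P (ee i) (n+1) from (pr_single P i (n+1) (by omega)).symm,
        pr_add P (ee i) _ (n+1) hPc]
      refine pr_congr P (n+1) fun k hk => ?_
      have h0 := hleσ k hk
      have e1 : σ k = ee i k + ee j k + ee n k := rfl
      show ee i k + (ee j k + (ee n k + (ν k - σ k))) = ν k
      omega
    have eqp : P i * P j * P n * Mn n Q P μ ν₃ = Mn n Q P μ ν := by
      unfold Mn
      rw [hQ1, one_mul, one_mul]
      calc P i * P j * P n * pr P ν₃ (n+1)
          = P i * (P j * (P n * pr P ν₃ (n+1))) := by noncomm_ring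
        _ = pr P ν (n+1) := hP3
    have hmeas : ∑ k ∈ Finset.range (n+1), (μ k + ν₃ k) < N := by
      have b1 : ∑ k ∈ Finset.range (n+1), (μ k + ν₃ k)
          = (∑ k ∈ Finset.range (n+1), μ k) + ∑ k ∈ Finset.range (n+1), ν₃ k :=
        Finset.sum_add_distrib
      have b2 : ∑ k ∈ Finset.range (n+1), ν₃ k
          = ∑ k ∈ Finset.range (n+1), (ν k - σ k) := rfl
      have h6 := nat_sum_sub ν σ (n+1) hleσ
      have h7 : ∑ k ∈ Finset.range (n+1), σ k = 3 := sig_sum i j hi hj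
      have h10 : ∑ k ∈ Finset.range (n+1), (μ k + ν k)
          = (∑ k ∈ Finset.range (n+1), μ k) + ∑ k ∈ Finset.range (n+1), ν k :=
        Finset.sum_add_distrib
      omega
    have hdeg : (∑ k ∈ Finset.range n, ((μ k : ℤ) - (ν₃ k : ℤ)))
        - 2 * ((μ n : ℤ) - (ν₃ n : ℤ)) = 0 := by
      rw [Finset.sum_sub_distrib]
      have c1 := cast_sum_sub ν σ n (fun k hk => hleσ k (by omega))
      have b2 : (∑ k ∈ Finset.range n, ((ν₃ k : ℕ) : ℤ))
          = ∑ k ∈ Finset.range n, ((ν k - σ k : ℕ) : ℤ) := rfl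
      have cσ : ∑ k ∈ Finset.range n, ((σ k : ℕ) : ℤ) = 2 := sig_sum_int i j hi hj
      have hσn : σ n = 1 := sig_n i j hi hj
      have c3 : ((ν₃ n : ℕ) : ℤ) = (ν n : ℤ) - 1 := by
        have h0 := hleσ n (by omega)
        show ((ν n - σ n : ℕ) : ℤ) = (ν n : ℤ) - 1
        omega
      rw [Finset.sum_sub_distrib] at hd
      omega
    rw [← eqp]
    exact mul_mem (hg4 i hi j hj) (ih _ hmeas μ ν₃ rfl hdeg)
  -- final case analysis
  by_cases h1 : (∃ i, i < n ∧ μ i ≠ 0) ∧ (∃ j, j < n ∧ ν j ≠ 0)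
  · obtain ⟨⟨i, hi, hμi⟩, ⟨j, hj, hνj⟩⟩ := h1
    exact quad i j (Or.inl ⟨hi, hj⟩) (by omega) (by omega) (hg2 i hi j hj)
  · by_cases h2 : μ n ≠ 0 ∧ ν n ≠ 0
    · exact quad n n (Or.inr ⟨rfl, rfl⟩) (by omega) (by omega) hg1
    · have h2' : μ n = 0 ∨ ν n = 0 := by
        rcases not_and_or.mp h2 with h | h
        · exact Or.inl (not_not.mp h)
        · exact Or.inr (not_not.mp h)
      rcases not_and_or.mp h1 with hA | hB
      · push_neg at hA
        have ha0 : ∑ k ∈ Finset.range n, μ k = 0 :=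
          Finset.sum_eq_zero fun k hk => hA k (Finset.mem_range.mp hk)
        rcases h2' with hμn | hνn
        · by_cases hν0 : ν n = 0
          · exfalso
            have hb0 : ∑ k ∈ Finset.range n, ν k = 0 := by omega
            have : ∀ k < n, ν k = 0 := by
              intro k hk
              have := Finset.sum_eq_zero_iff.mp hb0 k (Finset.mem_range.mpr hk)
              omega
            have ht : ∑ k ∈ Finset.range (n+1), (μ k + ν k) = 0 := by omega
            exact hz ht
          · have hb2 : 2 ≤ ∑ k ∈ Finset.range n, ν k := by omega
            obtain ⟨i, hi, h1', j, hj, h2''⟩ := hex ν hb2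
            exact cubicP i j hi hj (fun k hk => by
              by_cases h : k = n
              · rw [h]; exact hμn
              · exact hA k (by omega)) h1' h2'' (by omega)
        · exfalso
          have : ∑ k ∈ Finset.range n, ν k = 0 ∧ μ n = 0 := by omega
          exact hz (by omega)
      · push_neg at hB
        have hb0 : ∑ k ∈ Finset.range n, ν k = 0 :=
          Finset.sum_eq_zero fun k hk => hB k (Finset.mem_range.mp hk)
        rcases h2' with hμn | hνn
        · exfalso
          have : ∑ k ∈ Finset.range n, μ k = 0 ∧ ν n = 0 := by omega
          exact hz (by omega)
        · by_cases hμ0 : μ n = 0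
          · exfalso
            exact hz (by omega)
          · have ha2 : 2 ≤ ∑ k ∈ Finset.range n, μ k := by omega
            obtain ⟨i, hi, h1', j, hj, h2''⟩ := hex μ ha2
            exact cubicQ i j hi hj h1' h2'' (by omega)



def MsetD (n : ℕ) (Q P : ℕ → A) : Set A :=
  {a : A | ∃ μ ν : ℕ → ℕ,
    ((∑ i ∈ Finset.range n, ((μ i : ℤ) - (ν i : ℤ))) -
      2 * ((μ n : ℤ) - (ν n : ℤ)) = 0) ∧ a = Mn n Q P μ ν}

lemma main
    (hPQ : ∀ i ≤ n, ∀ j ≤ n, P i * Q j - Q j * P i = if i = j then 1 else 0)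
    (hQQ : ∀ i ≤ n, ∀ j ≤ n, Q i * Q j = Q j * Q i)
    (hPP : ∀ i ≤ n, ∀ j ≤ n, P i * P j = P j * P i) :
    (Algebra.adjoin ℂ
      ({Q n * P n} ∪
        {a : A | ∃ i < n, ∃ j < n, a = Q i * P j} ∪
        {a : A | ∃ i < n, ∃ j < n, a = Q i * Q j * Q n} ∪
        {a : A | ∃ i < n, ∃ j < n, a = P i * P j * P n})).toSubmodule =
    Submodule.span ℂ (MsetD n Q P) := by
  have hQc : ∀ a < n+1, ∀ b < n+1, Commute (Q a) (Q b) :=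
    fun a ha b hb => hQQ a (by omega) b (by omega)
  have hPc : ∀ a < n+1, ∀ b < n+1, Commute (P a) (P b) :=
    fun a ha b hb => hPP a (by omega) b (by omega)
  have hmul : ∀ u ∈ MsetD n Q P, ∀ v ∈ MsetD n Q P,
      u * v ∈ Submodule.span ℂ (MsetD n Q P) := by
    rintro u ⟨μ, ν, hdu, rfl⟩ v ⟨μ', ν', hdv, rfl⟩
    have hk := key n Q P hPQ hQQ hPP
      (fun k => (μ k : ℤ) + μ' k - ν k - ν' k)
      (∑ i ∈ Finset.range (n+1), ν i) μ ν μ' ν' (fun i hi => rfl) rfl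
    have hsub : Tset n Q P (fun k => (μ k : ℤ) + μ' k - ν k - ν' k) ⊆ MsetD n Q P := by
      rintro a ⟨α, β, hab, rfl⟩
      refine ⟨α, β, ?_, rfl⟩
      have e : ∀ k ∈ Finset.range n, ((α k : ℤ) - (β k : ℤ))
          = ((μ k : ℤ) - ν k) + ((μ' k : ℤ) - ν' k) := fun k hk => by
        have h := hab k (by have := Finset.mem_range.mp hk; omega)
        beta_reduce at h
        omega
      rw [Finset.sum_congr rfl e, Finset.sum_add_distrib]
      have en := hab n (by omega)
      beta_reduce at en
      linarith [hdu, hdv, en]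
    exact Submodule.span_mono hsub hk
  refine le_antisymm ?_ ?_
  · intro x hx
    replace hx : x ∈ Algebra.adjoin ℂ
      (({Q n * P n} : Set A) ∪
        {a : A | ∃ i < n, ∃ j < n, a = Q i * P j} ∪
        {a : A | ∃ i < n, ∃ j < n, a = Q i * Q j * Q n} ∪
        {a : A | ∃ i < n, ∃ j < n, a = P i * P j * P n}) := hx
    induction hx using Algebra.adjoin_induction with
    | mem g hg =>
      apply Submodule.subset_span
      rcases hg with ((hg | hg) | hg) | hg
      · rw [Set.mem_singleton_iff] at hg
        subst hg
        refine ⟨ee n, ee n, by simp, ?_⟩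
        show Q n * P n = pr Q (ee n) (n+1) * pr P (ee n) (n+1)
        rw [pr_single Q n (n+1) (by omega), pr_single P n (n+1) (by omega)]
      · obtain ⟨i, hi, j, hj, rfl⟩ := hg
        refine ⟨ee i, ee j, ?_, ?_⟩
        · have s1 := sum_ee_int i n; rw [if_pos hi] at s1
          have s2 := sum_ee_int j n; rw [if_pos hj] at s2
          have e1 : ee i n = 0 := ee_ne (by omega)
          have e2 : ee j n = 0 := ee_ne (by omega)
          rw [Finset.sum_sub_distrib]
          omega
        · show Q i * P j = pr Q (ee i) (n+1) * pr P (ee j) (n+1)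
          rw [pr_single Q i (n+1) (by omega), pr_single P j (n+1) (by omega)]
      · obtain ⟨i, hi, j, hj, rfl⟩ := hg
        refine ⟨fun k => ee i k + (ee j k + ee n k), fun _ => 0, ?_, ?_⟩
        · beta_reduce
          have b : ∀ k, ((ee i k + (ee j k + ee n k) : ℕ) : ℤ) - ((0:ℕ) : ℤ)
              = ((ee i k : ℕ) : ℤ) + ((ee j k : ℕ) : ℤ) + ((ee n k : ℕ) : ℤ) := fun k => by
            push_cast; ring
          rw [Finset.sum_congr rfl (fun k _ => b k), Finset.sum_add_distrib,
            Finset.sum_add_distrib]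
          have s1 := sum_ee_int i n; rw [if_pos hi] at s1
          have s2 := sum_ee_int j n; rw [if_pos hj] at s2
          have s3 := sum_ee_int n n; rw [if_neg (by omega : ¬ n < n)] at s3
          have e1 : ee i n = 0 := ee_ne (by omega)
          have e2 : ee j n = 0 := ee_ne (by omega)
          have e3 : ee n n = 1 := ee_self n
          omega
        · show Q i * Q j * Q n
            = pr Q (fun k => ee i k + (ee j k + ee n k)) (n+1) * pr P (fun _ => 0) (n+1)
          have t1 : pr Q (ee j) (n+1) * pr Q (ee n) (n+1)
              = pr Q (fun k => ee j k + ee n k) (n+1) := pr_add Q _ _ _ hQc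
          have t2 : pr Q (ee i) (n+1) * pr Q (fun k => ee j k + ee n k) (n+1)
              = pr Q (fun k => ee i k + (ee j k + ee n k)) (n+1) := pr_add Q _ _ _ hQc
          rw [pr_one P _ _ (fun k hk => rfl), mul_one, ← t2, ← t1,
            pr_single Q i (n+1) (by omega), pr_single Q j (n+1) (by omega),
            pr_single Q n (n+1) (by omega), mul_assoc]
      · obtain ⟨i, hi, j, hj, rfl⟩ := hg
        refine ⟨fun _ => 0, fun k => ee i k + (ee j k + ee n k), ?_, ?_⟩
        · beta_reduce
          have b : ∀ k, ((0:ℕ) : ℤ) - ((ee i k + (ee j k + ee n k) : ℕ) : ℤ)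
              = -(((ee i k : ℕ) : ℤ) + ((ee j k : ℕ) : ℤ) + ((ee n k : ℕ) : ℤ)) := fun k => by
            push_cast; ring
          rw [Finset.sum_congr rfl (fun k _ => b k), Finset.sum_neg_distrib,
            Finset.sum_add_distrib, Finset.sum_add_distrib]
          have s1 := sum_ee_int i n; rw [if_pos hi] at s1
          have s2 := sum_ee_int j n; rw [if_pos hj] at s2
          have s3 := sum_ee_int n n; rw [if_neg (by omega : ¬ n < n)] at s3
          have e1 : ee i n = 0 := ee_ne (by omega)
          have e2 : ee j n = 0 := ee_ne (by omega)
          have e3 : ee n n = 1 := ee_self n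
          omega
        · show P i * P j * P n
            = pr Q (fun _ => 0) (n+1) * pr P (fun k => ee i k + (ee j k + ee n k)) (n+1)
          have t1 : pr P (ee j) (n+1) * pr P (ee n) (n+1)
              = pr P (fun k => ee j k + ee n k) (n+1) := pr_add P _ _ _ hPc
          have t2 : pr P (ee i) (n+1) * pr P (fun k => ee j k + ee n k) (n+1)
              = pr P (fun k => ee i k + (ee j k + ee n k)) (n+1) := pr_add P _ _ _ hPc
          rw [pr_one Q _ _ (fun k hk => rfl), one_mul, ← t2, ← t1,
            pr_single P i (n+1) (by omega), pr_single P j (n+1) (by omega),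
            pr_single P n (n+1) (by omega), mul_assoc]
    | algebraMap r =>
      rw [Algebra.algebraMap_eq_smul_one]
      refine Submodule.smul_mem _ _ (Submodule.subset_span ⟨fun _ => 0, fun _ => 0, by simp, ?_⟩)
      show (1:A) = pr Q (fun _ => 0) (n+1) * pr P (fun _ => 0) (n+1)
      rw [pr_one Q _ _ (fun k hk => rfl), pr_one P _ _ (fun k hk => rfl), one_mul]
    | add x y hx hy ihx ihy => exact add_mem ihx ihy
    | mul x y hx hy ihx ihy =>
      have h := Submodule.mul_mem_mul ihx ihy
      rw [Submodule.span_mul_span] at h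
      refine Submodule.span_le.mpr ?_ h
      rintro z hz
      rw [Set.mem_mul] at hz
      obtain ⟨u, hu, v, hv, rfl⟩ := hz
      exact hmul u hu v hv
  · rw [Submodule.span_le]
    rintro a ⟨μ, ν, hdeg, rfl⟩
    have m1 : Q n * P n ∈ (({Q n * P n} : Set A) ∪
        {a : A | ∃ i < n, ∃ j < n, a = Q i * P j} ∪
        {a : A | ∃ i < n, ∃ j < n, a = Q i * Q j * Q n} ∪
        {a : A | ∃ i < n, ∃ j < n, a = P i * P j * P n}) :=
      Or.inl (Or.inl (Or.inl rfl))
    have m2 : ∀ i < n, ∀ j < n, Q i * P j ∈ (({Q n * P n} : Set A) ∪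
        {a : A | ∃ i < n, ∃ j < n, a = Q i * P j} ∪
        {a : A | ∃ i < n, ∃ j < n, a = Q i * Q j * Q n} ∪
        {a : A | ∃ i < n, ∃ j < n, a = P i * P j * P n}) :=
      fun i hi j hj => Or.inl (Or.inl (Or.inr ⟨i, hi, j, hj, rfl⟩))
    have m3 : ∀ i < n, ∀ j < n, Q i * Q j * Q n ∈ (({Q n * P n} : Set A) ∪
        {a : A | ∃ i < n, ∃ j < n, a = Q i * P j} ∪
        {a : A | ∃ i < n, ∃ j < n, a = Q i * Q j * Q n} ∪
        {a : A | ∃ i < n, ∃ j < n, a = P i * P j * P n}) :=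
      fun i hi j hj => Or.inl (Or.inr ⟨i, hi, j, hj, rfl⟩)
    have m4 : ∀ i < n, ∀ j < n, P i * P j * P n ∈ (({Q n * P n} : Set A) ∪
        {a : A | ∃ i < n, ∃ j < n, a = Q i * P j} ∪
        {a : A | ∃ i < n, ∃ j < n, a = Q i * Q j * Q n} ∪
        {a : A | ∃ i < n, ∃ j < n, a = P i * P j * P n}) :=
      fun i hi j hj => Or.inr ⟨i, hi, j, hj, rfl⟩
    exact gen n Q P hPQ hQQ hPP (Algebra.adjoin ℂ _)
      (Algebra.subset_adjoin m1)
      (fun i hi j hj => Algebra.subset_adjoin (m2 i hi j hj))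
      (fun i hi j hj => Algebra.subset_adjoin (m3 i hi j hj))
      (fun i hi j hj => Algebra.subset_adjoin (m4 i hi j hj))
      _ μ ν rfl hdeg

end St12


/-- In the Weyl algebra `A_{n+1}(ℂ)` (0-based indexing: the paper's
`Q_i` is `Q (i-1)` and `Q_{n+1}` is `Q n`), the ℂ-span of the differential
monomials `Q^μ P^ν` with `μ, ν ∈ ℕ^{n+1}` and
`∑_{i=1}^n (μ_i − ν_i) − 2(μ_{n+1} − ν_{n+1}) = 0` is generated as a ℂ-algebra
by `1` and the elements `Q_iP_j, Q_{n+1}P_{n+1}, Q_iQ_jQ_{n+1}, P_iP_jP_{n+1}`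
for `i, j = 1,…,n`. -/
theorem stmt12 (n : ℕ) (hn : 1 ≤ n) (A : Type*) [Ring A] [Algebra ℂ A]
    (Q P : ℕ → A)
    (hPQ : ∀ i ≤ n, ∀ j ≤ n, P i * Q j - Q j * P i = if i = j then 1 else 0)
    (hQQ : ∀ i ≤ n, ∀ j ≤ n, Q i * Q j = Q j * Q i)
    (hPP : ∀ i ≤ n, ∀ j ≤ n, P i * P j = P j * P i) :
    (Algebra.adjoin ℂ
      ({Q n * P n} ∪
        {a : A | ∃ i < n, ∃ j < n, a = Q i * P j} ∪
        {a : A | ∃ i < n, ∃ j < n, a = Q i * Q j * Q n} ∪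
        {a : A | ∃ i < n, ∃ j < n, a = P i * P j * P n})).toSubmodule =
    Submodule.span ℂ
      {a : A | ∃ μ ν : ℕ → ℕ,
        ((∑ i ∈ Finset.range n, ((μ i : ℤ) - (ν i : ℤ))) -
          2 * ((μ n : ℤ) - (ν n : ℤ)) = 0) ∧
        a = ((List.range (n + 1)).map fun i => Q i ^ μ i).prod *
            ((List.range (n + 1)).map fun i => P i ^ ν i).prod} := by
  have h := St12.main n Q P hPQ hQQ hPP
  exact h
end

section
/- Let V = ℂ[Q₁,…,Q_{n+1}] and fix an integer ℓ ≥ 0. Let M ⊆ V be the span of monomials Q^μ with μ ∈ ℕ^{n+1} and Σ_{i=1}^n μ_i − 2μ_{n+1} = ℓ. Then for every such monomial Q^μ ∈ M, one has Q^μ = D(Q_n^ℓ) where D = (1/ℓ!)·Q^μ P_n^ℓ, and D preserves M (it commutes with the Euler operator E = Σ_{i=1}^n Q_iP_i − 2Q_{n+1}P_{n+1}). Hence M is generated by Q_n^ℓ under the action of the algebra of E-invariant differential operators. -/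
/-!
The Euler operator `E = ∑ wᵢ Qᵢ Pᵢ` with integer weights `w` acts on each monomial `Q^ν` by the
scalar `weight w ν`. The operator `Q^μ P_j^ℓ` sends `Q^ν` to a multiple of `Q^(μ + ν - ℓ eⱼ)`, which
has the same weight as `Q^ν` as soon as `weight w μ = ℓ wⱼ`; hence it commutes with `E`. Applied
to `Q_j^ℓ`, the operator `P_j^ℓ` produces `ℓ!`, which gives `Q^μ` after dividing by `ℓ!`.
-/

namespace MvPolynomial

variable {R σ : Type*} [CommRing R]

theorem iterate_pderiv_monomial [DecidableEq σ] (i : σ) (k : ℕ) (ν : σ →₀ ℕ) (c : R) :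
    (pderiv i)^[k] (monomial ν c) =
      monomial (ν - Finsupp.single i k) ((ν i).descFactorial k * c) := by
  induction k with
  | zero => simp
  | succ k ih =>
    rw [Function.iterate_succ_apply', ih, pderiv_monomial, tsub_tsub, ← Finsupp.single_add,
      Finsupp.tsub_apply, Finsupp.single_eq_same, Nat.descFactorial_succ]
    push_cast
    ring_nf

theorem iterate_pderiv_X_pow_self (i : σ) (k : ℕ) :
    (pderiv i)^[k] (X i ^ k : MvPolynomial σ R) = C (k.factorial : R) := by
  classical
  rw [X_pow_eq_monomial, iterate_pderiv_monomial]
  simp [Nat.descFactorial_self]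

theorem weight_add_tsub_single {w : σ → ℤ} {μ ν : σ →₀ ℕ} {j : σ} {ℓ : ℕ}
    (hμ : Finsupp.weight w μ = ℓ • w j) (hν : ℓ ≤ ν j) :
    Finsupp.weight w (μ + (ν - Finsupp.single j ℓ)) = Finsupp.weight w ν := by
  classical
  have hle : Finsupp.single j ℓ ≤ ν := Finsupp.single_le_iff.mpr hν
  conv_rhs => rw [← tsub_add_cancel_of_le hle]
  rw [map_add, map_add, hμ, Finsupp.weight_single, add_comm]

variable [Fintype σ]

noncomputable def weightedEuler (w : σ → ℤ) : MvPolynomial σ R →ₗ[R] MvPolynomial σ R :=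
  ∑ i, w i • (LinearMap.mulLeft R (X i) ∘ₗ (pderiv i).toLinearMap)

theorem weightedEuler_apply (w : σ → ℤ) (p : MvPolynomial σ R) :
    weightedEuler w p = ∑ i, w i • (X i * pderiv i p) := by
  simp [weightedEuler]

theorem weightedEuler_monomial (w : σ → ℤ) (ν : σ →₀ ℕ) (c : R) :
    weightedEuler w (monomial ν c) = Finsupp.weight w ν • monomial ν c := by
  simp only [weightedEuler_apply, X_mul_pderiv_monomial, Finsupp.weight_eq_sum, Finset.sum_smul]
  refine Finset.sum_congr rfl fun i _ => ?_
  rw [smul_comm, smul_assoc]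

theorem weightedEuler_monomial_mul_iterate_pderiv {w : σ → ℤ} {μ : σ →₀ ℕ} {j : σ} {ℓ : ℕ}
    (hμ : Finsupp.weight w μ = ℓ • w j) (c : R) (p : MvPolynomial σ R) :
    weightedEuler w (monomial μ c * (pderiv j)^[ℓ] p) =
      monomial μ c * (pderiv j)^[ℓ] (weightedEuler w p) := by
  classical
  let T : MvPolynomial σ R →ₗ[R] MvPolynomial σ R :=
    LinearMap.mulLeft R (monomial μ c) ∘ₗ (pderiv j).toLinearMap ^ ℓ
  have hT : ∀ q, T q = monomial μ c * (pderiv j)^[ℓ] q := fun q => by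
    simp [T, Module.End.pow_apply]
  rw [← hT, ← hT]
  induction p using induction_on' with
  | monomial ν d =>
    rw [weightedEuler_monomial, map_zsmul, hT, iterate_pderiv_monomial, monomial_mul,
      weightedEuler_monomial]
    rcases le_or_gt ℓ (ν j) with hν | hν
    · rw [weight_add_tsub_single hμ hν]
    · simp [Nat.descFactorial_eq_zero_iff_lt.mpr hν]
  | add p q hp hq => rw [map_add, map_add, hp, hq, map_add, map_add]

end MvPolynomial

open MvPolynomial in
/-- For `ℓ ≥ 0`, every monomial `Q^μ` (`μ ∈ ℕ^{n+1}`) with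
`∑_{i=1}^n μ_i − 2μ_{n+1} = ℓ` satisfies `Q^μ = D (Q_n^ℓ)` where
`D = (1/ℓ!) Q^μ P_n^ℓ` (here `Q_n` is the variable of index `n−1` in 0-based
indexing and `P_n = ∂/∂Q_n`), and `D` commutes with the Euler operator
`E = ∑_{i=1}^n Q_iP_i − 2Q_{n+1}P_{n+1}`. -/
theorem stmt13 (n : ℕ) (hn : 0 < n) (ℓ : ℕ)
    (μ : Fin (n + 1) →₀ ℕ)
    (hμ : (∑ i : Fin n, (μ i.castSucc : ℤ)) - 2 * (μ (Fin.last n) : ℤ) = ℓ) :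
    let j : Fin (n + 1) := ⟨n - 1, by omega⟩
    let D : MvPolynomial (Fin (n + 1)) ℂ → MvPolynomial (Fin (n + 1)) ℂ :=
      fun p => (ℓ.factorial : ℂ)⁻¹ • (monomial μ 1 * (⇑(pderiv j))^[ℓ] p)
    let E : MvPolynomial (Fin (n + 1)) ℂ → MvPolynomial (Fin (n + 1)) ℂ :=
      fun p => (∑ i : Fin n, X i.castSucc * pderiv i.castSucc p) -
        2 * (X (Fin.last n) * pderiv (Fin.last n) p)
    D (X j ^ ℓ) = monomial μ 1 ∧ ∀ p, D (E p) = E (D p) := by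
  intro j D E
  let w : Fin (n + 1) → ℤ := Fin.snoc (fun _ => 1) (-2)
  have hwj : w j = 1 := Fin.snoc_castSucc (i := ⟨n - 1, by omega⟩) ..
  have hE : ∀ p, E p = weightedEuler w p := fun p => by
    simp only [E, w, weightedEuler_apply, Fin.sum_univ_castSucc, Fin.snoc_castSucc, Fin.snoc_last,
      one_smul, neg_smul, ← sub_eq_add_neg, ofNat_zsmul, nsmul_eq_mul, Nat.cast_ofNat]
  have hwμ : Finsupp.weight w μ = ℓ • w j := by
    rw [Finsupp.weight_eq_sum, Fin.sum_univ_castSucc, hwj]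
    simp only [w, Fin.snoc_castSucc, Fin.snoc_last, nsmul_eq_mul, mul_one]
    linear_combination hμ
  refine ⟨?_, fun p => ?_⟩
  · simp only [D, iterate_pderiv_X_pow_self, mul_comm, C_mul_monomial]
    rw [smul_monomial, smul_eq_mul, mul_one, inv_mul_cancel₀ (mod_cast ℓ.factorial_ne_zero)]
  · simp only [D, hE, map_smul, weightedEuler_monomial_mul_iterate_pderiv hwμ]
end

section
/- Let 𝔤 be the Lie algebra 𝔰𝔩₂(ℂ) with standard basis e, h, f, and let A₂(ℂ) be the Weyl algebra in Q₁, Q₂, P₁, P₂. The map determined by e ↦ (1/2)P₁²Q₂^{−1}, h ↦ −Q₁P₁ − 1/2, f ↦ −(1/2)Q₁²Q₂ extends to a Lie algebra homomorphism from 𝔰𝔩₂(ℂ) into the localized Weyl algebra A₂(ℂ)[Q₂^{−1}] with commutator bracket, i.e. [h,e]=2e, [h,f]=−2f, [e,f]=h hold for these operators. -/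
/-- In the localized Weyl algebra `A₂(ℂ)[Q₂^{-1}]` (abstractly: a
ℂ-algebra containing `Q₁, P₁, Q₂, P₂` with the Weyl relations and an inverse
`Q₂⁻¹` of `Q₂`), the elements `e = (1/2)P₁²Q₂⁻¹`, `h = −Q₁P₁ − 1/2`,
`f = −(1/2)Q₁²Q₂` satisfy the `𝔰𝔩₂` relations `[h,e] = 2e`, `[h,f] = −2f`,
`[e,f] = h`; i.e. `e, h, f` span a Lie algebra homomorphic image of `𝔰𝔩₂(ℂ)`. -/
theorem stmt15 (A : Type*) [Ring A] [Algebra ℂ A]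
    (Q1 P1 Q2 P2 Q2inv : A)
    (h11 : P1 * Q1 - Q1 * P1 = 1) (h22 : P2 * Q2 - Q2 * P2 = 1)
    (c12 : Commute Q1 Q2) (c12' : Commute Q1 P2)
    (c21 : Commute P1 Q2) (c21' : Commute P1 P2)
    (hinv : Q2 * Q2inv = 1) (hinv' : Q2inv * Q2 = 1)
    (cinv1 : Commute Q2inv Q1) (cinv2 : Commute Q2inv P1)
    (cinvP2 : P2 * Q2inv - Q2inv * P2 = -(Q2inv * Q2inv)) :
    let e : A := (1/2 : ℂ) • (P1 * P1 * Q2inv)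
    let h : A := -(Q1 * P1) - (1/2 : ℂ) • (1 : A)
    let f : A := -((1/2 : ℂ) • (Q1 * Q1 * Q2))
    h * e - e * h = 2 * e ∧ h * f - f * h = -(2 * f) ∧ e * f - f * e = h := by
  intro e h f
  -- normal ordering rules
  have r1 : P1 * Q1 = Q1 * P1 + 1 := by rw [← h11]; noncomm_ring
  have r1' : ∀ x : A, P1 * (Q1 * x) = Q1 * (P1 * x) + x := by
    intro x; rw [← mul_assoc, r1, add_mul, one_mul, mul_assoc]
  have w2 : Q2 * Q1 = Q1 * Q2 := c12.symm.eq
  have w2' : ∀ x : A, Q2 * (Q1 * x) = Q1 * (Q2 * x) := by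
    intro x; rw [← mul_assoc, w2, mul_assoc]
  have w3 : Q2 * P1 = P1 * Q2 := c21.symm.eq
  have w3' : ∀ x : A, Q2 * (P1 * x) = P1 * (Q2 * x) := by
    intro x; rw [← mul_assoc, w3, mul_assoc]
  have w4 : Q2inv * Q1 = Q1 * Q2inv := cinv1.eq
  have w4' : ∀ x : A, Q2inv * (Q1 * x) = Q1 * (Q2inv * x) := by
    intro x; rw [← mul_assoc, w4, mul_assoc]
  have w5 : Q2inv * P1 = P1 * Q2inv := cinv2.eq
  have w5' : ∀ x : A, Q2inv * (P1 * x) = P1 * (Q2inv * x) := by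
    intro x; rw [← mul_assoc, w5, mul_assoc]
  have w6 : ∀ x : A, Q2inv * (Q2 * x) = x := by
    intro x; rw [← mul_assoc, hinv', one_mul]
  have w7 : ∀ x : A, Q2 * (Q2inv * x) = x := by
    intro x; rw [← mul_assoc, hinv, one_mul]
  -- key commutator identities without scalars
  set X : A := P1 * P1 * Q2inv with hX
  set Y : A := Q1 * Q1 * Q2 with hY
  have key1 : X * (Q1 * P1) - (Q1 * P1) * X = X + X := by
    simp only [hX, mul_assoc, mul_add, add_mul, mul_one, one_mul, r1', w4', w5', w6, w7, w4, w5, hinv, hinv', r1]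
    noncomm_ring
  have key2 : (Q1 * P1) * Y - Y * (Q1 * P1) = Y + Y := by
    simp only [hY, mul_assoc, mul_add, add_mul, mul_one, one_mul, r1', w2', w3', w6, w7, w2, w3,
      hinv, hinv', r1]
    noncomm_ring
  have key3 : X * Y - Y * X = 4 * (Q1 * P1) + 2 := by
    simp only [hX, hY, mul_assoc, mul_add, add_mul, mul_one, one_mul, r1', w2', w3', w4', w5',
      w6, w7, w2, w3, w4, w5, hinv, hinv', r1]
    noncomm_ring
    simp [nsmul_eq_mul]
  have k1 : X * (Q1 * P1) = (Q1 * P1) * X + (X + X) := by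
    rw [← key1]; noncomm_ring
  have k2 : (Q1 * P1) * Y = Y * (Q1 * P1) + (Y + Y) := by
    rw [← key2]; noncomm_ring
  have k3 : X * Y = Y * X + (4 * (Q1 * P1) + 2) := by
    rw [← key3]; noncomm_ring
  refine ⟨?_, ?_, ?_⟩
  · show (-(Q1 * P1) - (1/2 : ℂ) • (1 : A)) * ((1/2 : ℂ) • X) -
      ((1/2 : ℂ) • X) * (-(Q1 * P1) - (1/2 : ℂ) • (1 : A)) = 2 * ((1/2 : ℂ) • X)
    simp only [smul_mul_assoc, mul_smul_comm, one_mul, mul_one, sub_mul, mul_sub, neg_mul,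
      mul_neg, smul_sub, smul_add, smul_neg, two_mul, smul_smul, k1]
    abel
  · show (-(Q1 * P1) - (1/2 : ℂ) • (1 : A)) * (-((1/2 : ℂ) • Y)) -
      (-((1/2 : ℂ) • Y)) * (-(Q1 * P1) - (1/2 : ℂ) • (1 : A)) = -(2 * (-((1/2 : ℂ) • Y)))
    simp only [smul_mul_assoc, mul_smul_comm, one_mul, mul_one, sub_mul, mul_sub, neg_mul,
      mul_neg, neg_neg, smul_sub, smul_add, smul_neg, two_mul, smul_smul, k2]
    abel
  · show ((1/2 : ℂ) • X) * (-((1/2 : ℂ) • Y)) - (-((1/2 : ℂ) • Y)) * ((1/2 : ℂ) • X) =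
      -(Q1 * P1) - (1/2 : ℂ) • (1 : A)
    simp only [smul_mul_assoc, mul_smul_comm, one_mul, mul_one, sub_mul, mul_sub, neg_mul,
      mul_neg, neg_neg, smul_sub, smul_add, smul_neg, smul_smul, k3]
    have e4 : ((1/2 : ℂ) * (1/2)) • ((4 : A) * (Q1 * P1)) = Q1 * P1 := by
      rw [Algebra.smul_def, ← map_ofNat (algebraMap ℂ A) 4, ← mul_assoc, ← map_mul]
      norm_num
    have e2 : ((1/2 : ℂ) * (1/2)) • (2 : A) = (1/2 : ℂ) • (1 : A) := by
      rw [Algebra.smul_def, Algebra.smul_def, ← map_ofNat (algebraMap ℂ A) 2, ← map_mul]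
      norm_num
    rw [e4, e2]
    abel
end
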